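/- arXiv:2105.14835 — 6 statements merged into one kernel-verified Lean document; each statement's English description precedes it below -/
import Mathlib

section
/- If a ReLU neural network given by affine maps T^(ℓ)(x) = A^(ℓ)x + b^(ℓ) computes a positively homogeneous function g : ℝ^{n_0} → ℝ^{n_{k+1}} (i.e., g(λx) = λ·g(x) for all λ ≥ 0 and all x), then the corresponding homogenized network, given by the linear maps x ↦ A^(ℓ)x with all biases b^(ℓ) set to zero, computes the same function g. -/
open Finset

/-- Componentwise ReLU. -/
noncomputable def relu {m : ℕ} (x : Fin m → ℝ) : Fin m → ℝ := fun i => max 0 (x i)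

/-- Output of the `ℓ`-th hidden layer of the ReLU network with layer widths `w`, weight
matrices `A` and biases `b` (so `layerOut 0 x = x` and
`layerOut (ℓ+1) x = σ(A⁽ℓ⁺¹⁾ (layerOut ℓ x) + b⁽ℓ⁺¹⁾)`). -/
noncomputable def layerOut (w : ℕ → ℕ)
    (A : ∀ ℓ : ℕ, Matrix (Fin (w (ℓ + 1))) (Fin (w ℓ)) ℝ)
    (b : ∀ ℓ : ℕ, Fin (w (ℓ + 1)) → ℝ) :
    (ℓ : ℕ) → (Fin (w 0) → ℝ) → (Fin (w ℓ) → ℝ)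
  | 0, x => x
  | ℓ + 1, x => relu ((A ℓ).mulVec (layerOut w A b ℓ x) + b ℓ)

lemma relu_smul {m : ℕ} (c : ℝ) (hc : 0 ≤ c) (x : Fin m → ℝ) :
    relu (c • x) = c • relu x := by
  funext i
  simp only [relu, Pi.smul_apply, smul_eq_mul]
  rw [mul_max_of_nonneg _ _ hc, mul_zero]

lemma relu_continuous {m : ℕ} : Continuous (relu (m := m)) := by
  apply continuous_pi
  intro i
  exact continuous_const.max (continuous_apply i)

lemma layerOut_smul (w : ℕ → ℕ)
    (A : ∀ ℓ : ℕ, Matrix (Fin (w (ℓ + 1))) (Fin (w ℓ)) ℝ)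
    (b : ∀ ℓ : ℕ, Fin (w (ℓ + 1)) → ℝ) (c : ℝ) (hc : 0 < c) :
    ∀ ℓ x, layerOut w A b ℓ (c • x) = c • layerOut w A (fun m => c⁻¹ • b m) ℓ x := by
  intro ℓ
  induction ℓ with
  | zero => intro x; rfl
  | succ ℓ ih =>
    intro x
    show relu _ = c • relu _
    rw [ih x, Matrix.mulVec_smul, ← relu_smul c hc.le]
    rw [smul_add, smul_smul, mul_inv_cancel₀ hc.ne', one_smul]

lemma layerOut_continuous_bias (w : ℕ → ℕ)
    (A : ∀ ℓ : ℕ, Matrix (Fin (w (ℓ + 1))) (Fin (w ℓ)) ℝ)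
    (b : ∀ ℓ : ℕ, Fin (w (ℓ + 1)) → ℝ) (x : Fin (w 0) → ℝ) (ℓ : ℕ) :
    Continuous fun t : ℝ => layerOut w A (fun m => t • b m) ℓ x := by
  induction ℓ with
  | zero => exact continuous_const
  | succ ℓ ih =>
    show Continuous fun t : ℝ =>
      relu ((A ℓ).mulVec (layerOut w A (fun m => t • b m) ℓ x) + t • b ℓ)
    apply relu_continuous.comp
    apply Continuous.add
    · exact ((Matrix.mulVecLin (A ℓ)).continuous_on_pi).comp ih
    · exact continuous_id.smul continuous_const

/-- if a ReLU neural network with `k` hidden layers (affine layers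
`T⁽ℓ⁾(x) = A⁽ℓ⁾x + b⁽ℓ⁾` followed by a final linear layer) computes a positively
homogeneous function `g`, then the corresponding homogenized network (all biases set to
zero) computes the same function `g`. -/
theorem homogenized_network_computes_same (k : ℕ) (w : ℕ → ℕ)
    (A : ∀ ℓ : ℕ, Matrix (Fin (w (ℓ + 1))) (Fin (w ℓ)) ℝ)
    (b : ∀ ℓ : ℕ, Fin (w (ℓ + 1)) → ℝ)
    (g : (Fin (w 0) → ℝ) → (Fin (w (k + 1)) → ℝ))
    (hg : ∀ x, g x = (A k).mulVec (layerOut w A b k x))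
    (hpos : ∀ (lam : ℝ), 0 ≤ lam → ∀ x, g (lam • x) = lam • g x) :
    ∀ x, g x = (A k).mulVec (layerOut w A (fun _ => 0) k x) := by
  intro x
  set F : ℝ → Fin (w (k + 1)) → ℝ :=
    fun t => (A k).mulVec (layerOut w A (fun m => t • b m) k x) with hF
  have key : ∀ t : ℝ, 0 < t → F t = g x := by
    intro t ht
    have hc : 0 < t⁻¹ := inv_pos.mpr ht
    have h1 : layerOut w A b k (t⁻¹ • x) = t⁻¹ • layerOut w A (fun m => t • b m) k x := by
      have := layerOut_smul w A b t⁻¹ hc k x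
      simpa [inv_inv] using this
    have h2 : g (t⁻¹ • x) = t⁻¹ • g x := hpos t⁻¹ hc.le x
    have h3 := hg (t⁻¹ • x)
    rw [h2, h1, Matrix.mulVec_smul] at h3
    have := congrArg (fun v => t • v) h3
    simpa [smul_smul, mul_inv_cancel₀ ht.ne'] using this.symm
  have hFcont : Continuous F :=
    ((Matrix.mulVecLin (A k)).continuous_on_pi).comp (layerOut_continuous_bias w A b x k)
  have hF0 : F 0 = (A k).mulVec (layerOut w A (fun _ => 0) k x) := by
    have : (fun m : ℕ => (0 : ℝ) • b m) = fun _ => (0 : Fin _ → ℝ) := by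
      funext m; simp
    simp only [hF, this]
  have htend1 : Filter.Tendsto F (nhdsWithin 0 (Set.Ioi 0)) (nhds (F 0)) :=
    (hFcont.tendsto 0).mono_left nhdsWithin_le_nhds
  have htend2 : Filter.Tendsto F (nhdsWithin 0 (Set.Ioi 0)) (nhds (g x)) := by
    apply Filter.Tendsto.congr' _ tendsto_const_nhds
    filter_upwards [self_mem_nhdsWithin] with t ht
    exact (key t ht).symm
  have := tendsto_nhds_unique htend2 htend1
  rw [this, hF0]
end

section
/- The evaluation map g ↦ (g(r_S))_{∅⊊S⊊[4]_0}, which evaluates a function g ∈ S^30 at the 30 ray generators r_S, is a linear isomorphism between S^30 and ℝ^30. In particular, S^30 is a 30-dimensional real vector space. -/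
open Finset

/-- Extend `x ∈ ℝ⁴` by the coordinate `x₀ = 0`, giving a vector indexed by `[4]₀ = {0,…,4}`. -/
noncomputable def ext (x : Fin 4 → ℝ) : Fin 5 → ℝ := Fin.cases 0 x

/-- The cell `C_π = {x ∈ ℝ⁴ : x_{π(0)} ≤ x_{π(1)} ≤ x_{π(2)} ≤ x_{π(3)} ≤ x_{π(4)}}` of the
hyperplane arrangement `H` (with the convention `x₀ = 0`). -/
def cell (π : Equiv.Perm (Fin 5)) : Set (Fin 4 → ℝ) :=
  {x | ∀ i : Fin 4, ext x (π i.castSucc) ≤ ext x (π i.succ)}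

/-- `g : ℝ⁴ → ℝ` is `H`-conforming: it is a positively homogeneous continuous function that
is linear on each cell `C_π` of the arrangement `H` (hence continuous piecewise linear). -/
def Hconforming (g : (Fin 4 → ℝ) → ℝ) : Prop :=
  Continuous g ∧ (∀ (lam : ℝ), 0 ≤ lam → ∀ x, g (lam • x) = lam * g x) ∧
    ∀ π : Equiv.Perm (Fin 5), ∃ a : Fin 4 → ℝ, ∀ x ∈ cell π, g x = ∑ j, a j * x j

/-- The generator `r_S` of the ray `R_S`, for `∅ ⊊ S ⊊ [4]₀`: the 0/1 indicator vector of
the complement of `S` if `0 ∈ S`, and the 0/(−1) indicator vector of `S` if `0 ∉ S`. -/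
noncomputable def ray (S : Finset (Fin 5)) : Fin 4 → ℝ := fun j =>
  if (0 : Fin 5) ∈ S then (if j.succ ∈ S then 0 else 1) else (if j.succ ∈ S then -1 else 0)

/-- `S³⁰`: the (sub)space of all `H`-conforming functions `ℝ⁴ → ℝ`. -/
def S30 : Submodule ℝ ((Fin 4 → ℝ) → ℝ) where
  carrier := {g | Hconforming g}
  add_mem' := by
    rintro g h ⟨hgc, hgh, hgl⟩ ⟨hhc, hhh, hhl⟩
    refine ⟨hgc.add hhc, ?_, ?_⟩
    · intro lam hlam x
      simp only [Pi.add_apply, hgh lam hlam x, hhh lam hlam x]; ring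
    · intro π
      obtain ⟨a, ha⟩ := hgl π
      obtain ⟨b, hb⟩ := hhl π
      refine ⟨a + b, fun x hx => ?_⟩
      simp only [Pi.add_apply, ha x hx, hb x hx, add_mul, Finset.sum_add_distrib]
  zero_mem' := ⟨continuous_const, by simp, fun π => ⟨0, by simp⟩⟩
  smul_mem' := by
    rintro c g ⟨hgc, hgh, hgl⟩
    refine ⟨hgc.const_smul c, ?_, ?_⟩
    · intro lam hlam x
      simp only [Pi.smul_apply, smul_eq_mul, hgh lam hlam x]; ring
    · intro π
      obtain ⟨a, ha⟩ := hgl π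
      refine ⟨c • a, fun x hx => ?_⟩
      simp only [Pi.smul_apply, smul_eq_mul, ha x hx, Finset.mul_sum]
      exact Finset.sum_congr rfl fun j _ => by ring

/-- The index set of the 30 rays: nonempty proper subsets of `[4]₀`. -/
def RayIdx : Type := {S : Finset (Fin 5) // S.Nonempty ∧ S ≠ Finset.univ}

/-- The evaluation map `g ↦ (g(r_S))_{∅ ⊊ S ⊊ [4]₀}` on `S³⁰`, as a linear map. -/
noncomputable def evalRays : S30 →ₗ[ℝ] (RayIdx → ℝ) where
  toFun g := fun S => (g : (Fin 4 → ℝ) → ℝ) (ray S.1)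
  map_add' g h := rfl
  map_smul' c g := rfl

/-!
On a cell `C_π` an `H`-conforming `g` is linear, and every `x ∈ C_π` is the combination of the
four rays `r_S` of the flag `S = {π 0} ⊂ {π 0, π 1} ⊂ ⋯` with coefficients the consecutive
differences `x_{π(k+1)} - x_{π k}`; hence `g` is determined by its values at the rays and
evaluation is injective. Conversely, for `∅ ⊊ S ⊊ [4]₀` the function
`f_S x = max 0 (min_{i ∉ S} x_i - max_{i ∈ S} x_i)` is `H`-conforming (on a cell the minimum and
the maximum are attained at fixed coordinates), equals `1` at `r_S` and vanishes at every other
ray, so evaluation is onto.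
-/

theorem Finset.inf'_eq_apply_min' {α β : Type*} [LinearOrder α] [LinearOrder β] {f : α → β}
    (hf : Monotone f) {s : Finset α} (hs : s.Nonempty) : s.inf' hs f = f (s.min' hs) := by
  rw [hf.map_finset_min', min'_eq_inf', inf'_image]
  rfl

theorem Finset.sup'_eq_apply_max' {α β : Type*} [LinearOrder α] [LinearOrder β] {f : α → β}
    (hf : Monotone f) {s : Finset α} (hs : s.Nonempty) : s.sup' hs f = f (s.max' hs) := by
  rw [hf.map_finset_max', max'_eq_sup', sup'_image]
  rfl

theorem Fin.sum_ite_castSucc_lt_sub {M : Type*} [AddCommGroup M] {n : ℕ} (y : Fin (n + 1) → M)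
    (m : Fin (n + 1)) :
    ∑ k : Fin n, (if k.castSucc < m then y k.succ - y k.castSucc else 0) = y m - y 0 := by
  induction m using Fin.induction with
  | zero => simp
  | succ i ih =>
    have hsplit (k : Fin n) : (if k.castSucc < i.succ then y k.succ - y k.castSucc else 0) =
        (if k.castSucc < i.castSucc then y k.succ - y k.castSucc else 0) +
          if k = i then y k.succ - y k.castSucc else 0 := by
      rcases lt_trichotomy k i with h | rfl | h
      · simp [Fin.castSucc_lt_succ_iff, h, h.le, h.ne]
      · simp [Fin.castSucc_lt_succ_iff]
      · simp [Fin.castSucc_lt_succ_iff, h.ne', not_lt.2 h.le, not_le.2 h]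
    rw [sum_congr rfl fun k _ => hsplit k, sum_add_distrib, ih, sum_ite_eq' univ i,
      if_pos (mem_univ i)]
    abel

section CutGap

variable {ι : Type*} [Fintype ι] [DecidableEq ι] (S : Finset ι) (hS : S.Nonempty)
  (hSc : Sᶜ.Nonempty)

def cutGap (h : ι → ℝ) : ℝ := max 0 (Sᶜ.inf' hSc h - S.sup' hS h)

theorem continuous_cutGap : Continuous (cutGap S hS hSc) :=
  continuous_const.max ((Continuous.finset_inf'_apply hSc fun i _ => continuous_apply i).sub
    (Continuous.finset_sup'_apply hS fun i _ => continuous_apply i))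

theorem cutGap_ite_mem (T : Finset ι) {a b : ℝ} (hab : a ≤ b) :
    cutGap S hS hSc (fun i => if i ∈ T then a else b) = if S = T then b - a else 0 := by
  set f : ι → ℝ := fun i => if i ∈ T then a else b
  split_ifs with hST
  · subst hST
    have hinf : Sᶜ.inf' hSc f = b :=
      inf'_eq_of_forall _ _ fun i hi => if_neg (mem_compl.1 hi)
    have hsup : S.sup' hS f = a :=
      sup'_eq_of_forall _ _ fun i hi => if_pos hi
    rw [cutGap, hinf, hsup, max_eq_right (sub_nonneg.2 hab)]
  · refine max_eq_left (sub_nonpos.2 ?_)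
    by_cases hsub : S ⊆ T
    · obtain ⟨j, hjT, hjS⟩ := exists_of_ssubset (ssubset_of_subset_of_ne hsub hST)
      have ⟨i, hi⟩ := hS
      calc Sᶜ.inf' hSc f ≤ a := (inf'_le f (mem_compl.2 hjS)).trans_eq (if_pos hjT)
        _ ≤ S.sup' hS f := (if_pos (hsub hi)).symm.trans_le (le_sup' f hi)
    · obtain ⟨i, hiS, hiT⟩ := not_subset.1 hsub
      have ⟨j, hj⟩ := hSc
      calc Sᶜ.inf' hSc f ≤ b := (inf'_le f hj).trans (by simp only [f]; split_ifs <;> linarith)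
        _ ≤ S.sup' hS f := (if_neg hiT).symm.trans_le (le_sup' f hiS)

end CutGap

theorem exists_cutGap_eq_sum_of_monotone {ι : Type*} [Fintype ι] [LinearOrder ι] {S : Finset ι}
    (hS : S.Nonempty) (hSc : Sᶜ.Nonempty) (π : Equiv.Perm ι) :
    ∃ c : ι → ℝ, ∀ h : ι → ℝ, Monotone (h ∘ π) → cutGap S hS hSc h = ∑ i, c i * h i := by
  set i₀ := (Sᶜ.image π.symm).min' (hSc.image _)
  set j₀ := (S.image π.symm).max' (hS.image _)
  have hcut (h : ι → ℝ) (hh : Monotone (h ∘ π)) :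
      cutGap S hS hSc h = max 0 (h (π i₀) - h (π j₀)) := by
    rw [cutGap, ← Function.comp_apply (f := h), ← Function.comp_apply (f := h) (x := j₀),
      ← inf'_eq_apply_min' hh, ← sup'_eq_apply_max' hh, inf'_image, sup'_image]
    simp [Function.comp_def]
  rcases le_total i₀ j₀ with hij | hji
  · refine ⟨0, fun h hh => ?_⟩
    rw [hcut h hh, max_eq_left (sub_nonpos.2 (by exact hh hij))]
    simp
  · refine ⟨fun i => (if i = π i₀ then 1 else 0) - if i = π j₀ then 1 else 0, fun h hh => ?_⟩
    rw [hcut h hh, max_eq_right (sub_nonneg.2 (by exact hh hji))]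
    simp [sub_mul, sum_sub_distrib]

theorem ext_apply_zero (x : Fin 4 → ℝ) : ext x 0 = 0 := rfl

theorem ext_apply_succ (x : Fin 4 → ℝ) (j : Fin 4) : ext x j.succ = x j := rfl

theorem continuous_ext : Continuous ext :=
  continuous_pi fun i => Fin.cases continuous_const continuous_apply i

theorem ext_smul (c : ℝ) (x : Fin 4 → ℝ) : ext (c • x) = c • ext x := by
  funext i
  cases i using Fin.cases <;> simp [ext_apply_zero, ext_apply_succ]

theorem ext_ray (S : Finset (Fin 5)) :
    ext (ray S) = fun i => (if i ∈ S then 0 else 1) - if 0 ∈ S then 0 else 1 := by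
  funext i
  cases i using Fin.cases with
  | zero => simp [ext_apply_zero]
  | succ j => rw [ext_apply_succ, ray]; split_ifs <;> norm_num

theorem mem_cell_iff {π : Equiv.Perm (Fin 5)} {x : Fin 4 → ℝ} :
    x ∈ cell π ↔ Monotone (ext x ∘ π) := by
  rw [Fin.monotone_iff_le_succ]
  rfl

theorem exists_mem_cell (x : Fin 4 → ℝ) : ∃ π, x ∈ cell π :=
  ⟨Tuple.sort (ext x), mem_cell_iff.2 (Tuple.monotone_sort _)⟩

theorem smul_mem_cell {π : Equiv.Perm (Fin 5)} {x : Fin 4 → ℝ} (hx : x ∈ cell π) {c : ℝ}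
    (hc : 0 ≤ c) : c • x ∈ cell π := by
  rw [mem_cell_iff, ext_smul] at *
  exact hx.const_mul hc

theorem map_smul_of_forall_cell {g : (Fin 4 → ℝ) → ℝ}
    (hg : ∀ π, ∃ a : Fin 4 → ℝ, ∀ x ∈ cell π, g x = ∑ j, a j * x j) {c : ℝ} (hc : 0 ≤ c)
    (x : Fin 4 → ℝ) : g (c • x) = c * g x := by
  obtain ⟨π, hx⟩ := exists_mem_cell x
  obtain ⟨a, ha⟩ := hg π
  simp only [ha _ (smul_mem_cell hx hc), ha x hx, mul_sum, Pi.smul_apply, smul_eq_mul,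
    mul_left_comm]

theorem exists_comp_ext_eq_sum {G : (Fin 5 → ℝ) → ℝ} {π : Equiv.Perm (Fin 5)}
    (hG : ∃ c : Fin 5 → ℝ, ∀ h : Fin 5 → ℝ, Monotone (h ∘ π) → G h = ∑ i, c i * h i) :
    ∃ a : Fin 4 → ℝ, ∀ x ∈ cell π, G (ext x) = ∑ j, a j * x j := by
  obtain ⟨c, hc⟩ := hG
  refine ⟨fun j => c j.succ, fun x hx => ?_⟩
  rw [hc _ (mem_cell_iff.1 hx), Fin.sum_univ_succ, ext_apply_zero, mul_zero, zero_add]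
  rfl

instance : DecidableEq RayIdx :=
  inferInstanceAs (DecidableEq {S : Finset (Fin 5) // S.Nonempty ∧ S ≠ univ})

instance : Fintype RayIdx :=
  inferInstanceAs (Fintype {S : Finset (Fin 5) // S.Nonempty ∧ S ≠ univ})

theorem RayIdx.compl_nonempty (S : RayIdx) : S.1ᶜ.Nonempty :=
  (compl_ne_univ_iff_nonempty _).1 (by rw [compl_compl]; exact S.2.2)

noncomputable def rayBasis (S : RayIdx) : (Fin 4 → ℝ) → ℝ :=
  fun x => cutGap S.1 S.2.1 S.compl_nonempty (ext x)

theorem rayBasis_mem (S : RayIdx) : rayBasis S ∈ S30 := by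
  have hlin (π : Equiv.Perm (Fin 5)) :
      ∃ a : Fin 4 → ℝ, ∀ x ∈ cell π, rayBasis S x = ∑ j, a j * x j :=
    exists_comp_ext_eq_sum (exists_cutGap_eq_sum_of_monotone _ _ π)
  exact ⟨(continuous_cutGap _ _ _).comp continuous_ext,
    fun _ hc x => map_smul_of_forall_cell hlin hc x, hlin⟩

theorem rayBasis_ray (S T : RayIdx) : rayBasis S (ray T.1) = if S = T then 1 else 0 := by
  simp only [rayBasis, ext_ray, ite_sub]
  rw [cutGap_ite_mem _ _ _ _ (by norm_num), sub_sub_sub_cancel_right, sub_zero]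
  exact if_congr Subtype.ext_iff.symm rfl rfl

def flag (π : Equiv.Perm (Fin 5)) (k : Fin 4) : Finset (Fin 5) :=
  univ.filter fun i => π.symm i ≤ k.castSucc

theorem mem_flag {π : Equiv.Perm (Fin 5)} {k : Fin 4} {i : Fin 5} :
    i ∈ flag π k ↔ π.symm i ≤ k.castSucc := by
  simp [flag]

theorem flag_nonempty (π : Equiv.Perm (Fin 5)) (k : Fin 4) : (flag π k).Nonempty :=
  ⟨π 0, mem_flag.2 (by simp)⟩

theorem flag_ne_univ (π : Equiv.Perm (Fin 5)) (k : Fin 4) : flag π k ≠ univ := by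
  intro h
  have hlast : π (Fin.last 4) ∈ flag π k := h ▸ mem_univ _
  rw [mem_flag, Equiv.symm_apply_apply] at hlast
  exact (Fin.castSucc_lt_last k).not_ge hlast

theorem ext_ray_flag (π : Equiv.Perm (Fin 5)) (k : Fin 4) (i : Fin 5) :
    ext (ray (flag π k)) i =
      (if k.castSucc < π.symm i then 1 else 0) - if k.castSucc < π.symm 0 then 1 else 0 := by
  simp only [ext_ray, mem_flag, ← not_lt, ite_not]

theorem ray_flag_mem_cell (π : Equiv.Perm (Fin 5)) (k : Fin 4) : ray (flag π k) ∈ cell π := by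
  rw [mem_cell_iff]
  intro m m' hm
  simp only [Function.comp_apply, ext_ray_flag, Equiv.symm_apply_apply]
  gcongr
  split_ifs with h h' <;> first | exact (h' (h.trans_le hm)).elim | norm_num

theorem eq_sum_smul_ray_flag (π : Equiv.Perm (Fin 5)) (x : Fin 4 → ℝ) :
    x = ∑ k, (ext x (π k.succ) - ext x (π k.castSucc)) • ray (flag π k) := by
  funext j
  have telescope := Fin.sum_ite_castSucc_lt_sub (ext x ∘ π)
  simp only [Function.comp_apply] at telescope
  simp only [Finset.sum_apply, Pi.smul_apply, smul_eq_mul, ← ext_apply_succ (ray _),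
    ext_ray_flag, mul_sub, mul_ite, mul_one, mul_zero, sum_sub_distrib]
  rw [telescope (π.symm j.succ), telescope (π.symm 0)]
  simp [ext_apply_succ, ext_apply_zero]

theorem apply_eq_sum_apply_ray_flag {g : (Fin 4 → ℝ) → ℝ} {π : Equiv.Perm (Fin 5)}
    {a : Fin 4 → ℝ} (ha : ∀ x ∈ cell π, g x = ∑ j, a j * x j) {x : Fin 4 → ℝ}
    (hx : x ∈ cell π) :
    g x = ∑ k, (ext x (π k.succ) - ext x (π k.castSucc)) * g (ray (flag π k)) := by
  have hdot : ∀ y ∈ cell π, g y = a ⬝ᵥ y := ha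
  conv_lhs => rw [hdot x hx, eq_sum_smul_ray_flag π x]
  simp only [dotProduct_sum, dotProduct_smul, smul_eq_mul, hdot _ (ray_flag_mem_cell π _)]

theorem eq_zero_of_forall_ray_eq_zero {g : (Fin 4 → ℝ) → ℝ} (hg : Hconforming g)
    (h0 : ∀ S : RayIdx, g (ray S.1) = 0) : g = 0 := by
  funext x
  obtain ⟨π, hx⟩ := exists_mem_cell x
  obtain ⟨a, ha⟩ := hg.2.2 π
  rw [apply_eq_sum_apply_ray_flag ha hx, Pi.zero_apply]
  exact sum_eq_zero fun k _ => by
    rw [h0 ⟨flag π k, flag_nonempty π k, flag_ne_univ π k⟩, mul_zero]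

theorem evalRays_injective : Function.Injective evalRays :=
  (injective_iff_map_eq_zero _).2 fun g hg =>
    Subtype.ext (eq_zero_of_forall_ray_eq_zero g.2 (congrFun hg))

theorem evalRays_surjective : Function.Surjective evalRays := by
  intro v
  refine ⟨∑ S, v S • ⟨rayBasis S, rayBasis_mem S⟩, funext fun T => ?_⟩
  simp only [map_sum, map_smul, Finset.sum_apply, Pi.smul_apply, smul_eq_mul]
  change ∑ S, v S * rayBasis S (ray T.1) = v T
  simp [rayBasis_ray]

theorem card_rayIdx : Nat.card RayIdx = 30 := by
  rw [Nat.card_eq_fintype_card]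
  decide

/-- the evaluation map `g ↦ (g(r_S))_S` at the 30 rays is a linear
isomorphism between `S³⁰` and `ℝ³⁰`; in particular `S³⁰` is a 30-dimensional real vector
space. -/
theorem evalRays_bijective_and_finrank :
    Function.Bijective evalRays ∧
      Nat.card RayIdx = 30 ∧ Module.finrank ℝ S30 = 30 := by
  have hbij : Function.Bijective evalRays := ⟨evalRays_injective, evalRays_surjective⟩
  refine ⟨hbij, card_rayIdx, ?_⟩
  rw [(LinearEquiv.ofBijective evalRays hbij).finrank_eq, Module.finrank_fintype_fun_eq_card,
    ← Nat.card_eq_fintype_card, card_rayIdx]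
end

section
/- For every integer k ≥ 2, there exist n ∈ ℕ and a function f : ℝ^n → ℝ such that f can be computed by a ReLU neural network with k hidden layers but f is not a linear combination of maxima of at most 2^k affine functions; that is, ReLU(k) is a strict superset of MAX(2^k). Concretely, for n = 2^k the function f(x) = max{0, x_1, …, x_{n-3}, max{x_{n-2}, x_{n-1}} + max{0, x_n}} lies in ReLU_n(k) ∖ MAX_n(2^k). -/
open Finset

/-- `T` is an affine map given by a matrix and a bias vector. -/
def IsAffineMap {n m : ℕ} (T : (Fin n → ℝ) → (Fin m → ℝ)) : Prop :=
  ∃ (A : Matrix (Fin m) (Fin n) ℝ) (b : Fin m → ℝ), ∀ x, T x = A.mulVec x + b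

/-- `IsStack k n m g` : `g = σ ∘ T⁽ᵏ⁾ ∘ σ ∘ ⋯ ∘ σ ∘ T⁽¹⁾` for affine maps `T⁽ˡ⁾`,
with input dimension `n` and output dimension `m`. -/
inductive IsStack : (k n m : ℕ) → ((Fin n → ℝ) → (Fin m → ℝ)) → Prop where
  | base (n : ℕ) : IsStack 0 n n id
  | step {k n m' m : ℕ} {h : (Fin n → ℝ) → (Fin m' → ℝ)}
      (T : (Fin m' → ℝ) → (Fin m → ℝ)) (hT : IsAffineMap T) (hh : IsStack k n m' h) :
      IsStack (k + 1) n m (relu ∘ T ∘ h)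

/-- `f ∈ ReLU_n(k)`: `f` is computed by a ReLU neural network with `k` hidden layers and
input dimension `n` (the last layer is a linear map, without bias). -/
def InReLU (n k : ℕ) (f : (Fin n → ℝ) → ℝ) : Prop :=
  ∃ (m : ℕ) (g : (Fin n → ℝ) → (Fin m → ℝ)) (c : Fin m → ℝ),
    IsStack k n m g ∧ ∀ x, f x = ∑ i, c i * g x i

/-- Maximum of `v` over a finite set `S` (junk value `0` if `S = ∅`). -/
noncomputable def finMaxOn {ι : Type*} (S : Finset ι) (v : ι → ℝ) : ℝ :=
  if h : S.Nonempty then S.sup' h v else 0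

/-- `f ∈ MAX_n(p)`: `f` is a finite linear combination of maxima of (at most) `p`
affine functions. -/
def InMAX (n p : ℕ) (f : (Fin n → ℝ) → ℝ) : Prop :=
  ∃ (N : ℕ) (lam : Fin N → ℝ) (a : Fin N → Fin p → Fin n → ℝ) (b : Fin N → Fin p → ℝ),
    ∀ x, f x = ∑ j, lam j * finMaxOn Finset.univ (fun i => (∑ t, a j i t * x t) + b j i)

/-!
`f` is the maximum of `max {x_{n-2}, x_{n-1}} + max {0, xₙ}` and of `2^(k-1) - 1` maxima of two of
the linear forms `0, x₁, …, x_{n-3}`. Each of these `2^(k-1)` functions needs one hidden layer, and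
a maximum of two networks of equal depth costs one more layer, so `f ∈ ReLU(k)`.

A maximum of at most `n` affine functions on `ℝⁿ` is affine along some direction `ν ≠ 0` (its
gradients lie on an affine hyperplane). Hence, for `g = ∑ⱼ gⱼ` with `gⱼ` affine along `wⱼ ≠ 0`,
the alternating sum of the second differences `Δ²_e g` over the vertices `∑_{j ∈ S} wⱼ` of the cube
spanned by the `wⱼ` vanishes. Now `f = max (x₁, f')`, where `f'` is the maximum of linear forms `ℓ`
not involving `x₁`, and the cone `{f' ≤ x₁}` is pointed: the forms `ℓ - x₁` have no common nonzero
zero. So a generic positive combination `Ξ` of them, which is `≤ 0` on the cone, does not vanish on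
any `wⱼ`; orienting the `wⱼ` so that `Ξ wⱼ > 0` puts every vertex but `0` outside the cone, where
`f` locally does not depend on `x₁`. With `e = t e₁` for small `t ≠ 0` only the vertex
`0` contributes, and `Δ²_e f (0) = |t| ≠ 0`.
-/

open Filter Topology

section Networks

variable {n m m₁ m₂ : ℕ}

theorem IsAffineMap.comp {l : ℕ} {T : (Fin m → ℝ) → (Fin l → ℝ)} {S : (Fin n → ℝ) → (Fin m → ℝ)}
    (hT : IsAffineMap T) (hS : IsAffineMap S) : IsAffineMap (T ∘ S) := by
  obtain ⟨A, b, hA⟩ := hT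
  obtain ⟨B, c, hB⟩ := hS
  exact ⟨A * B, A.mulVec c + b, fun x => by
    simp [hA, hB, Matrix.mulVec_add, Matrix.mulVec_mulVec, add_assoc]⟩

theorem IsAffineMap.append {T₁ : (Fin n → ℝ) → (Fin m₁ → ℝ)} {T₂ : (Fin n → ℝ) → (Fin m₂ → ℝ)}
    (hT₁ : IsAffineMap T₁) (hT₂ : IsAffineMap T₂) :
    IsAffineMap fun x => Fin.append (T₁ x) (T₂ x) := by
  obtain ⟨A₁, b₁, h₁⟩ := hT₁
  obtain ⟨A₂, b₂, h₂⟩ := hT₂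
  refine ⟨Matrix.of (Fin.append (A₁ ·) (A₂ ·)), Fin.append b₁ b₂, fun x => funext fun i => ?_⟩
  refine Fin.addCases (fun i => ?_) (fun i => ?_) i <;> simp [h₁, h₂, Matrix.mulVec]

theorem isAffineMap_linearMap (L : (Fin n → ℝ) →ₗ[ℝ] (Fin m → ℝ)) : IsAffineMap L :=
  ⟨LinearMap.toMatrix' L, 0, fun x => by simp⟩

theorem relu_append (u : Fin m₁ → ℝ) (v : Fin m₂ → ℝ) :
    relu (Fin.append u v) = Fin.append (relu u) (relu v) := by
  funext i
  refine Fin.addCases (fun i => ?_) (fun i => ?_) i <;> simp [relu]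

theorem IsStack.step_append {k : ℕ} {h : (Fin n → ℝ) → (Fin m → ℝ)} (hh : IsStack k n m h)
    {T₁ : (Fin m → ℝ) → (Fin m₁ → ℝ)} {T₂ : (Fin m → ℝ) → (Fin m₂ → ℝ)} (hT₁ : IsAffineMap T₁)
    (hT₂ : IsAffineMap T₂) :
    IsStack (k + 1) n (m₁ + m₂) fun x => Fin.append (relu (T₁ (h x))) (relu (T₂ (h x))) := by
  convert hh.step _ (hT₁.append hT₂) using 1
  funext x
  exact (relu_append _ _).symm

theorem IsStack.append {k : ℕ} {g₁ : (Fin n → ℝ) → (Fin m₁ → ℝ)} {g₂ : (Fin n → ℝ) → (Fin m₂ → ℝ)}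
    (h₁ : IsStack (k + 1) n m₁ g₁) (h₂ : IsStack (k + 1) n m₂ g₂) :
    IsStack (k + 1) n (m₁ + m₂) fun x => Fin.append (g₁ x) (g₂ x) := by
  induction k generalizing m₁ m₂ with
  | zero =>
    cases h₁ with | step T₁ hT₁ hh₁ =>
    cases h₂ with | step T₂ hT₂ hh₂ =>
    cases hh₁; cases hh₂
    exact (IsStack.base n).step_append hT₁ hT₂
  | succ k ih =>
    cases h₁ with | step T₁ hT₁ hh₁ =>
    cases h₂ with | step T₂ hT₂ hh₂ =>
    rename_i m₁' h₁ m₂' h₂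
    convert (ih hh₁ hh₂).step_append
      (hT₁.comp (isAffineMap_linearMap (LinearMap.funLeft ℝ ℝ (Fin.castAdd m₂'))))
      (hT₂.comp (isAffineMap_linearMap (LinearMap.funLeft ℝ ℝ (Fin.natAdd m₁')))) using 1
    funext x
    have e₁ : LinearMap.funLeft ℝ ℝ (Fin.castAdd m₂') (Fin.append (h₁ x) (h₂ x)) = h₁ x :=
      funext fun i => by simp [LinearMap.funLeft_apply]
    have e₂ : LinearMap.funLeft ℝ ℝ (Fin.natAdd m₁') (Fin.append (h₁ x) (h₂ x)) = h₂ x :=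
      funext fun i => by simp [LinearMap.funLeft_apply]
    simp only [Function.comp_apply, e₁, e₂]

theorem InReLU.exists_common {k : ℕ} {F G : (Fin n → ℝ) → ℝ} (hF : InReLU n k F)
    (hG : InReLU n k G) :
    ∃ m g, ∃ c d : Fin m → ℝ, IsStack k n m g ∧ ∀ x, F x = c ⬝ᵥ g x ∧ G x = d ⬝ᵥ g x := by
  obtain ⟨m₁, g₁, c, hg₁, hF⟩ := hF
  obtain ⟨m₂, g₂, d, hg₂, hG⟩ := hG
  cases k with
  | zero =>
    cases hg₁; cases hg₂
    exact ⟨n, id, c, d, .base n, fun x => ⟨hF x, hG x⟩⟩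
  | succ k =>
    refine ⟨m₁ + m₂, _, Fin.append c 0, Fin.append 0 d, hg₁.append hg₂, fun x => ⟨?_, ?_⟩⟩ <;>
      simp [dotProduct, Fin.sum_univ_add, hF, hG]

theorem InReLU.add {k : ℕ} {F G : (Fin n → ℝ) → ℝ} (hF : InReLU n k F) (hG : InReLU n k G) :
    InReLU n k fun x => F x + G x := by
  obtain ⟨m, g, c, d, hg, hFG⟩ := hF.exists_common hG
  exact ⟨m, g, c + d, hg, fun x => by
    show F x + G x = (c + d) ⬝ᵥ g x
    rw [(hFG x).1, (hFG x).2, add_dotProduct]⟩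

theorem max_eq_max_zero_sub_add_max_zero_sub_max_zero_neg (a b : ℝ) :
    max a b = max 0 (a - b) + max 0 b - max 0 (-b) := by
  rcases le_total a b with h | h <;> rcases le_total 0 b with h' | h' <;>
    simp [h, h', sub_nonpos.2, sub_nonneg.2]

theorem InReLU.max {k : ℕ} {F G : (Fin n → ℝ) → ℝ} (hF : InReLU n k F) (hG : InReLU n k G) :
    InReLU n (k + 1) fun x => max (F x) (G x) := by
  obtain ⟨m, g, c, d, hg, hFG⟩ := hF.exists_common hG
  refine ⟨3, relu ∘ (Matrix.of ![c - d, d, -d]).mulVec ∘ g, ![1, 1, -1],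
    hg.step _ ⟨_, 0, fun y => (add_zero _).symm⟩, fun x => ?_⟩
  have hrows : ∀ y, (Matrix.of ![c - d, d, -d]).mulVec y = ![(c - d) ⬝ᵥ y, d ⬝ᵥ y, (-d) ⬝ᵥ y] :=
    fun y => by ext i; fin_cases i <;> rfl
  beta_reduce
  simp only [Fin.sum_univ_three, Function.comp_apply, hrows, relu, (hFG x).1, (hFG x).2,
    sub_dotProduct, neg_dotProduct]
  rw [max_eq_max_zero_sub_add_max_zero_sub_max_zero_neg]
  simp only [Matrix.cons_val_zero, Matrix.cons_val_one, Matrix.cons_val_two, Matrix.tail_cons,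
    Matrix.head_cons]
  ring

theorem inReLU_zero_apply (i : Fin n) : InReLU n 0 fun x => x i :=
  ⟨n, id, Pi.single i 1, .base n, fun x => by simp [Pi.single_apply]⟩

theorem inReLU_zero_zero : InReLU n 0 fun _ => 0 :=
  ⟨n, id, 0, .base n, fun x => by simp⟩

theorem InReLU.sup'_range {k : ℕ} (m : ℕ) {F : ℕ → (Fin n → ℝ) → ℝ}
    (hF : ∀ p, InReLU n k (F p)) :
    InReLU n (m + k) fun x =>
      (range (2 ^ m)).sup' (nonempty_range_iff.2 (by positivity)) fun p => F p x := by
  induction m generalizing F with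
  | zero => simpa using hF 0
  | succ m ih =>
    rw [Nat.succ_add]
    convert (ih hF).max (ih (F := fun p => F (2 ^ m + p)) fun p => hF _) using 1
    funext x
    apply le_antisymm
    · refine sup'_le _ _ fun p hp => ?_
      rw [mem_range, pow_succ] at hp
      rcases lt_or_ge p (2 ^ m) with h | h
      · exact le_max_of_le_left (le_sup' (F · x) (mem_range.2 h))
      · obtain ⟨q, rfl⟩ := Nat.exists_eq_add_of_le h
        exact le_max_of_le_right (le_sup' (fun q => F (2 ^ m + q) x) (mem_range.2 (by omega)))
    · refine max_le (sup'_le _ _ fun p hp => le_sup' (F · x) ?_)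
        (sup'_le _ _ fun p hp => le_sup' (F · x) ?_) <;>
        simp only [mem_range, pow_succ] at hp ⊢ <;> omega

end Networks

section AffineAlong

variable {V : Type*} [AddCommGroup V]

def AffineAlong (g : V → ℝ) (v : V) : Prop :=
  ∃ c, ∀ x, g (x + v) = g x + c

theorem AffineAlong.neg {g : V → ℝ} {v : V} (h : AffineAlong g v) : AffineAlong g (-v) := by
  obtain ⟨c, hc⟩ := h
  refine ⟨-c, fun x => ?_⟩
  have := hc (x + -v)
  rw [neg_add_cancel_right] at this
  linarith

theorem AffineAlong.const_mul {g : V → ℝ} {v : V} (h : AffineAlong g v) (a : ℝ) :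
    AffineAlong (fun x => a * g x) v := by
  obtain ⟨c, hc⟩ := h
  exact ⟨a * c, fun x => by simp only [hc, mul_add]⟩

def secondDiff (F : V → ℝ) (e x : V) : ℝ :=
  F (x + e) + F (x - e) - 2 * F x

theorem AffineAlong.secondDiff_add {g : V → ℝ} {v : V} (h : AffineAlong g v) (e x : V) :
    secondDiff g e (x + v) = secondDiff g e x := by
  obtain ⟨c, hc⟩ := h
  simp only [secondDiff, add_right_comm x v, add_sub_right_comm x v, hc]
  ring

theorem sum_powerset_neg_one_pow_mul_eq_zero {ι : Type*} [Fintype ι] [DecidableEq ι]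
    (w : ι → V) (H : V → ℝ) (j : ι) (hH : ∀ x, H (x + w j) = H x) :
    ∑ S ∈ univ.powerset, (-1 : ℝ) ^ #S * H (∑ i ∈ S, w i) = 0 := by
  rw [← insert_erase (mem_univ j), sum_powerset_insert (notMem_erase j univ), ← sum_add_distrib]
  refine sum_eq_zero fun S hS => ?_
  have hjS : j ∉ S := fun h => notMem_erase j univ (mem_powerset.1 hS h)
  rw [card_insert_of_notMem hjS, sum_insert hjS, add_comm (w j), hH, pow_succ]
  ring

theorem sum_powerset_secondDiff_eq_zero {ι : Type*} [Fintype ι] [DecidableEq ι] {F : V → ℝ}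
    (g : ι → V → ℝ) (w : ι → V) (hg : ∀ j, AffineAlong (g j) (w j)) (hF : ∀ x, F x = ∑ j, g j x)
    (e : V) : ∑ S ∈ univ.powerset, (-1 : ℝ) ^ #S * secondDiff F e (∑ i ∈ S, w i) = 0 := by
  have hsum : ∀ x, secondDiff F e x = ∑ j, secondDiff (g j) e x := by
    simp [secondDiff, hF, mul_sum, sum_add_distrib, sum_sub_distrib]
  simp_rw [hsum, mul_sum]
  rw [sum_comm]
  exact sum_eq_zero fun j _ =>
    sum_powerset_neg_one_pow_mul_eq_zero w _ j ((hg j).secondDiff_add e)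

end AffineAlong

open Polynomial in
theorem exists_pos_dotProduct_ne_zero {ι κ : Type*} [Fintype ι] [Fintype κ] (u : κ → ι → ℝ)
    (hu : ∀ j, u j ≠ 0) : ∃ s : ι → ℝ, (∀ r, 0 < s r) ∧ ∀ j, s ⬝ᵥ u j ≠ 0 := by
  classical
  let e := Fintype.equivFin ι
  let P : κ → ℝ[X] := fun j => ∑ r, C (u j r) * X ^ (e r : ℕ)
  have hP : ∀ j, P j ≠ 0 := by
    intro j hj
    refine hu j (funext fun r => ?_)
    simpa [P, finsetSum_coeff, coeff_C_mul_X_pow, Fin.val_inj] using congrArg (coeff · (e r)) hj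
  have hQ : ∏ j, P j ≠ 0 := prod_ne_zero_iff.2 fun j _ => hP j
  obtain ⟨t, ht, hroot⟩ :=
    (Set.Ioi_infinite (0 : ℝ)).exists_notMem_finset (∏ j, P j).roots.toFinset
  refine ⟨fun r => t ^ (e r : ℕ), fun r => pow_pos ht _, fun j hj => hroot ?_⟩
  rw [Multiset.mem_toFinset, mem_roots hQ, IsRoot, eval_prod, prod_eq_zero_iff]
  refine ⟨j, mem_univ _, ?_⟩
  simp only [P, eval_finsetSum, eval_mul, eval_C, eval_pow, eval_X]
  simpa [dotProduct, mul_comm] using hj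

section PointedCone

variable {V ι : Type*} [AddCommGroup V] [Module ℝ V] [Fintype ι]

theorem exists_dual_nonpos_on_cone_and_ne_zero {κ : Type*} [Fintype κ] (φ : V →ₗ[ℝ] ℝ)
    (ℓ : ι → V →ₗ[ℝ] ℝ) (hsep : ∀ v, (∀ r, ℓ r v = φ v) → v = 0) (w : κ → V)
    (hw : ∀ j, w j ≠ 0) :
    ∃ Ξ : V →ₗ[ℝ] ℝ, (∀ x, (∀ r, ℓ r x ≤ φ x) → Ξ x ≤ 0) ∧ ∀ j, Ξ (w j) ≠ 0 := by
  obtain ⟨s, hs, hsw⟩ := exists_pos_dotProduct_ne_zero (fun j r => ℓ r (w j) - φ (w j))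
    fun j h => hw j <| hsep _ fun r => sub_eq_zero.1 (congrFun h r)
  refine ⟨∑ r, s r • (ℓ r - φ), fun x hx => ?_, fun j => by simpa [dotProduct] using hsw j⟩
  simpa using sum_nonpos fun r _ => mul_nonpos_of_nonneg_of_nonpos (hs r).le (sub_nonpos.2 (hx r))

variable (φ : V →ₗ[ℝ] ℝ) {F' : V → ℝ} (e : V)

theorem secondDiff_max_eventually_eq_zero (hF'e : ∀ x (t : ℝ), F' (x + t • e) = F' x) {x : V}
    (hx : φ x < F' x) :
    ∀ᶠ t in 𝓝 (0 : ℝ), secondDiff (fun y => max (φ y) (F' y)) (t • e) x = 0 := by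
  have hlim : ∀ σ : ℝ, ∀ᶠ t in 𝓝 (0 : ℝ), φ x + σ * t * φ e < F' x := fun σ =>
    ((by fun_prop : Continuous fun t : ℝ => φ x + σ * t * φ e).tendsto' 0 (φ x) (by simp)
      ).eventually_lt_const hx
  filter_upwards [hlim 1, hlim (-1)] with t h₁ h₂
  have hsub : x - t • e = x + (-t) • e := by rw [neg_smul, sub_eq_add_neg]
  simp only [secondDiff, hsub, map_add, map_smul, smul_eq_mul, hF'e]
  rw [max_eq_right (by linarith), max_eq_right (by linarith), max_eq_right hx.le]
  ring

theorem secondDiff_max_at_zero (hF'e : ∀ x (t : ℝ), F' (x + t • e) = F' x) (hF'0 : F' 0 = 0)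
    (t : ℝ) :
    secondDiff (fun y => max (φ y) (F' y)) (t • e) 0 = |t * φ e| := by
  have hF' : ∀ s : ℝ, F' (s • e) = 0 := fun s => by simpa [hF'0] using hF'e 0 s
  simp only [secondDiff, zero_add, zero_sub, ← neg_smul, map_smul, map_zero, hF', hF'0,
    smul_eq_mul]
  simp [← max_zero_add_max_neg_zero_eq_abs_self]

end PointedCone

theorem max_sup'_ne_sum_of_affineAlong {V ι κ : Type*} [AddCommGroup V] [Module ℝ V] [Fintype ι]
    [Nonempty ι] [Fintype κ] (φ : V →ₗ[ℝ] ℝ) (ℓ : ι → V →ₗ[ℝ] ℝ) (e : V) (hφe : φ e ≠ 0)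
    (hℓe : ∀ r, ℓ r e = 0) (hsep : ∀ v, (∀ r, ℓ r v = φ v) → v = 0) (g : κ → V → ℝ) (w : κ → V)
    (hw : ∀ j, w j ≠ 0) (hg : ∀ j, AffineAlong (g j) (w j)) :
    ¬ ∀ x, max (φ x) (univ.sup' univ_nonempty fun r => ℓ r x) = ∑ j, g j x := by
  classical
  intro hF
  set F' : V → ℝ := fun x => univ.sup' univ_nonempty fun r => ℓ r x
  have hF'e : ∀ x (t : ℝ), F' (x + t • e) = F' x := by simp [F', hℓe]
  obtain ⟨Ξ, hΞ, hΞw⟩ := exists_dual_nonpos_on_cone_and_ne_zero φ ℓ hsep w hw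
  set w' : κ → V := fun j => if 0 < Ξ (w j) then w j else -w j
  have hw' : ∀ j, 0 < Ξ (w' j) ∧ AffineAlong (g j) (w' j) := fun j => by
    by_cases h : 0 < Ξ (w j)
    · simpa [w', h] using hg j
    · simpa [w', h, lt_of_le_of_ne (not_lt.1 h) (hΞw j)] using (hg j).neg
  have hflat : ∀ᶠ t in 𝓝[≠] (0 : ℝ), ∀ S : Finset κ, S.Nonempty →
      secondDiff (fun y => max (φ y) (F' y)) (t • e) (∑ j ∈ S, w' j) = 0 := by
    refine eventually_all.2 fun S => eventually_imp_distrib_left.2 fun hS => ?_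
    refine nhdsWithin_le_nhds (secondDiff_max_eventually_eq_zero φ e hF'e ?_)
    by_contra! h
    have := hΞ _ fun r => (le_sup' (fun r => ℓ r _) (mem_univ r)).trans h
    have := sum_pos (fun j _ => (hw' j).1) hS
    rw [← map_sum] at this
    linarith
  obtain ⟨t, ht, ht0⟩ := (hflat.and self_mem_nhdsWithin).exists
  have hsum := sum_powerset_secondDiff_eq_zero g w' (fun j => (hw' j).2) hF (t • e)
  rw [sum_eq_single_of_mem ∅ (empty_mem_powerset _)
    fun S _ hS => by rw [ht S (nonempty_iff_ne_empty.2 hS), mul_zero]] at hsum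
  simp only [card_empty, pow_zero, one_mul, sum_empty] at hsum
  rw [secondDiff_max_at_zero φ e hF'e (by simp [F']) t] at hsum
  exact mul_ne_zero ht0 hφe (abs_eq_zero.1 hsum)

theorem exists_ne_zero_forall_dotProduct_eq {n : ℕ} {κ : Type*} [Fintype κ] [Nonempty κ]
    (hκ : Fintype.card κ ≤ n) (a : κ → Fin n → ℝ) :
    ∃ ν : Fin n → ℝ, ν ≠ 0 ∧ ∃ c, ∀ i, a i ⬝ᵥ ν = c := by
  let Φ : (Fin n → ℝ) × ℝ →ₗ[ℝ] (κ → ℝ) :=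
    (Matrix.of a).mulVecLin.coprod (LinearMap.toSpanSingleton ℝ _ (-1))
  obtain ⟨⟨ν, c⟩, hker, hne⟩ := (Submodule.ne_bot_iff _).1 <| LinearMap.ker_ne_bot_of_finrank_lt
    (f := Φ) (by simp [Module.finrank_prod]; omega)
  have hνc : ∀ i, a i ⬝ᵥ ν = c := fun i => by
    simpa [Φ, Matrix.mulVec, ← sub_eq_add_neg, sub_eq_zero] using congrFun hker i
  refine ⟨ν, fun hν => hne ?_, c, hνc⟩
  obtain ⟨i⟩ := ‹Nonempty κ›
  simp [hν, ← hνc i]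

theorem affineAlong_finMaxOn {n : ℕ} {ι : Type*} [Fintype ι] [Nonempty ι] (a : ι → Fin n → ℝ)
    (b : ι → ℝ) {ν : Fin n → ℝ} {c : ℝ} (h : ∀ i, a i ⬝ᵥ ν = c) :
    AffineAlong (fun x => finMaxOn univ fun i => a i ⬝ᵥ x + b i) ν := by
  refine ⟨c, fun x => ?_⟩
  simp only [finMaxOn, dif_pos univ_nonempty, dotProduct_add, h, sup'_add]
  exact sup'_congr univ_nonempty rfl fun i _ => by ring

theorem le_finMaxOn {ι : Type*} {S : Finset ι} {v : ι → ℝ} {i : ι} (hi : i ∈ S) :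
    v i ≤ finMaxOn S v := by
  rw [finMaxOn, dif_pos ⟨i, hi⟩]
  exact le_sup' v hi

theorem finMaxOn_le {ι : Type*} {S : Finset ι} {v : ι → ℝ} {M : ℝ} (h0 : 0 ≤ M)
    (h : ∀ i ∈ S, v i ≤ M) : finMaxOn S v ≤ M := by
  rw [finMaxOn]
  split_ifs with hS
  exacts [sup'_le hS v h, h0]

section Witness

noncomputable def witnessTail (n : ℕ) (hn : 0 < n) (x : Fin n → ℝ) : ℝ :=
  max (x ⟨n - 3, by omega⟩) (x ⟨n - 2, by omega⟩) + max 0 (x ⟨n - 1, by omega⟩)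

noncomputable def reluMaxWitness (n : ℕ) (hn : 0 < n) (x : Fin n → ℝ) : ℝ :=
  max 0 (max (finMaxOn (univ.filter fun i : Fin n => (i : ℕ) < n - 3) x) (witnessTail n hn x))

variable {n : ℕ} (hn : 0 < n) (x : Fin n → ℝ)

theorem witnessTail_le_iff {M : ℝ} : witnessTail n hn x ≤ M ↔
    (x ⟨n - 3, by omega⟩ ≤ M ∧ x ⟨n - 2, by omega⟩ ≤ M) ∧
      x ⟨n - 3, by omega⟩ + x ⟨n - 1, by omega⟩ ≤ M ∧
      x ⟨n - 2, by omega⟩ + x ⟨n - 1, by omega⟩ ≤ M := by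
  simp only [witnessTail, add_max, max_add, add_zero, max_le_iff]

theorem zero_le_reluMaxWitness : 0 ≤ reluMaxWitness n hn x :=
  le_max_left _ _

theorem le_reluMaxWitness_of_lt {i : Fin n} (hi : (i : ℕ) < n - 3) :
    x i ≤ reluMaxWitness n hn x :=
  (le_finMaxOn (by simpa using hi)).trans ((le_max_left _ _).trans (le_max_right _ _))

theorem witnessTail_le_reluMaxWitness : witnessTail n hn x ≤ reluMaxWitness n hn x :=
  (le_max_right _ _).trans (le_max_right _ _)

theorem reluMaxWitness_le {M : ℝ} (h0 : 0 ≤ M) (hx : ∀ i : Fin n, (i : ℕ) < n - 3 → x i ≤ M)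
    (htail : witnessTail n hn x ≤ M) : reluMaxWitness n hn x ≤ M :=
  max_le h0 (max_le (finMaxOn_le h0 fun i hi => hx i (by simpa using hi)) htail)

end Witness

section WitnessReLU

noncomputable def witnessCoord (n j : ℕ) : (Fin n → ℝ) → ℝ :=
  if h : j < n - 3 then fun x => x ⟨j, by omega⟩ else fun _ => 0

noncomputable def witnessPiece (n : ℕ) (hn : 0 < n) (p : ℕ) : (Fin n → ℝ) → ℝ :=
  if 2 * p + 2 < n then fun x => max (witnessCoord n (2 * p) x) (witnessCoord n (2 * p + 1) x)
  else witnessTail n hn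

variable {n : ℕ}

theorem inReLU_witnessCoord (j : ℕ) : InReLU n 0 (witnessCoord n j) := by
  unfold witnessCoord
  split_ifs
  exacts [inReLU_zero_apply _, inReLU_zero_zero]

theorem inReLU_witnessTail (hn : 0 < n) : InReLU n 1 (witnessTail n hn) :=
  ((inReLU_zero_apply _).max (inReLU_zero_apply _)).add
    (inReLU_zero_zero.max (inReLU_zero_apply _))

theorem inReLU_witnessPiece (hn : 0 < n) (p : ℕ) : InReLU n 1 (witnessPiece n hn p) := by
  unfold witnessPiece
  split_ifs
  exacts [(inReLU_witnessCoord _).max (inReLU_witnessCoord _), inReLU_witnessTail hn]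

variable (hn : 0 < n) (x : Fin n → ℝ)

theorem witnessCoord_le_reluMaxWitness (j : ℕ) :
    witnessCoord n j x ≤ reluMaxWitness n hn x := by
  unfold witnessCoord
  split_ifs with h
  exacts [le_reluMaxWitness_of_lt hn x h, zero_le_reluMaxWitness hn x]

theorem reluMaxWitness_eq_sup' {N : ℕ} (hN : n = 2 * N) (hN2 : 2 ≤ N) :
    reluMaxWitness n hn x =
      (range N).sup' (nonempty_range_iff.2 (by omega)) fun p => witnessPiece n hn p x := by
  set S := (range N).sup' (nonempty_range_iff.2 (by omega)) fun p => witnessPiece n hn p x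
  have hS : ∀ p < N, witnessPiece n hn p x ≤ S := fun p hp =>
    le_sup' (fun p => witnessPiece n hn p x) (mem_range.2 hp)
  have hcoord : ∀ j < n - 2, witnessCoord n j x ≤ S := fun j hj => by
    obtain ⟨q, rfl | rfl⟩ := Nat.even_or_odd' j <;>
      refine le_trans ?_ (hS q (by omega)) <;>
      simp only [witnessPiece, if_pos (show 2 * q + 2 < n by omega)]
    exacts [le_max_left _ _, le_max_right _ _]
  apply le_antisymm
  · refine reluMaxWitness_le hn x ?_ (fun i hi => ?_) ?_
    · simpa [witnessCoord] using hcoord (n - 3) (by omega)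
    · simpa [witnessCoord, hi] using hcoord i (by omega)
    · simpa [witnessPiece, show ¬2 * (N - 1) + 2 < n by omega] using hS (N - 1) (by omega)
  · refine sup'_le _ _ fun p _ => ?_
    unfold witnessPiece
    split_ifs
    exacts [max_le (witnessCoord_le_reluMaxWitness hn x _)
      (witnessCoord_le_reluMaxWitness hn x _), witnessTail_le_reluMaxWitness hn x]

theorem inReLU_reluMaxWitness {k : ℕ} (hk : 2 ≤ k) :
    InReLU (2 ^ k) k (reluMaxWitness (2 ^ k) (by positivity)) := by
  obtain ⟨m, rfl⟩ : ∃ m, k = m + 1 := ⟨k - 1, by omega⟩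
  convert InReLU.sup'_range m (inReLU_witnessPiece (n := 2 ^ (m + 1)) (by positivity)) using 1
  funext x
  exact reluMaxWitness_eq_sup' _ x (pow_succ' 2 m)
    (by simpa using Nat.pow_le_pow_right two_pos (show 1 ≤ m by omega))

end WitnessReLU

section WitnessNotMax

noncomputable def witnessFunctional (n : ℕ) (hn : 0 < n) :
    Fin n ⊕ Fin 2 → (Fin n → ℝ) →ₗ[ℝ] ℝ
  | .inl i => if (i : ℕ) = 0 ∨ (i : ℕ) = n - 1 then 0 else LinearMap.proj i
  | .inr 0 => LinearMap.proj ⟨n - 3, by omega⟩ + LinearMap.proj ⟨n - 1, by omega⟩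
  | .inr 1 => LinearMap.proj ⟨n - 2, by omega⟩ + LinearMap.proj ⟨n - 1, by omega⟩

variable {n : ℕ}

theorem witnessFunctional_inl_apply (hn : 0 < n) (i : Fin n) (x : Fin n → ℝ) :
    witnessFunctional n hn (.inl i) x = if (i : ℕ) = 0 ∨ (i : ℕ) = n - 1 then 0 else x i := by
  simp only [witnessFunctional]
  split_ifs <;> rfl

variable (hn : 4 ≤ n)

theorem eq_zero_of_forall_witnessFunctional_eq (v : Fin n → ℝ)
    (h : ∀ r, witnessFunctional n (by omega) r v = v ⟨0, by omega⟩) : v = 0 := by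
  have h0 : v ⟨0, by omega⟩ = 0 := by
    simpa [witnessFunctional_inl_apply] using (h (.inl ⟨0, by omega⟩)).symm
  have hmid : ∀ i : Fin n, (i : ℕ) ≠ n - 1 → v i = 0 := fun i hi => by
    by_cases hi0 : (i : ℕ) = 0
    · rwa [show i = ⟨0, by omega⟩ from Fin.ext hi0]
    · simpa [witnessFunctional_inl_apply, hi0, hi, h0] using h (.inl i)
  funext i
  by_cases hi : (i : ℕ) = n - 1
  · have := h (.inr 0)
    simp only [witnessFunctional, LinearMap.add_apply, LinearMap.coe_proj, Function.eval,
      hmid ⟨n - 3, by omega⟩ (by simp; omega), h0, zero_add] at this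
    rwa [show i = ⟨n - 1, by omega⟩ from Fin.ext hi]
  · exact hmid i hi

theorem reluMaxWitness_eq_max_sup' (x : Fin n → ℝ) :
    reluMaxWitness n (by omega) x =
      max (x ⟨0, by omega⟩)
        (univ.sup' univ_nonempty fun r => witnessFunctional n (by omega) r x) := by
  set M := univ.sup' univ_nonempty fun r => witnessFunctional n (by omega) r x
  have hM : ∀ r, witnessFunctional n (by omega) r x ≤ M := fun r =>
    le_sup' (fun r => witnessFunctional n (by omega) r x) (mem_univ r)
  have hinl : ∀ i : Fin n, (i : ℕ) ≠ 0 → (i : ℕ) ≠ n - 1 → x i ≤ M := fun i h0 h1 => by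
    simpa [witnessFunctional_inl_apply, h0, h1] using hM (.inl i)
  have htail := (witnessTail_le_iff (n := n) (by omega) x).1 le_rfl
  apply le_antisymm
  · have h0 : 0 ≤ M := by simpa [witnessFunctional_inl_apply] using hM (.inl ⟨0, by omega⟩)
    refine reluMaxWitness_le _ _ (h0.trans (le_max_right _ _)) (fun i hi => ?_) ?_
    · by_cases hi0 : (i : ℕ) = 0
      · exact le_max_of_le_left (le_of_eq (congrArg x (Fin.ext hi0)))
      · exact le_max_of_le_right (hinl i hi0 (by omega))
    · refine (witnessTail_le_iff _ x).2 ⟨⟨?_, ?_⟩, ?_, ?_⟩ <;> refine le_max_of_le_right ?_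
      · exact hinl _ (by simp; omega) (by simp; omega)
      · exact hinl _ (by simp; omega) (by simp; omega)
      · exact hM (.inr 0)
      · exact hM (.inr 1)
  · refine max_le (le_reluMaxWitness_of_lt _ _ (by simp; omega)) (sup'_le _ _ fun r _ => ?_)
    rcases r with i | j
    · rw [witnessFunctional_inl_apply]
      split_ifs with h
      · exact zero_le_reluMaxWitness _ _
      · rcases lt_or_ge (i : ℕ) (n - 3) with hi | hi
        · exact le_reluMaxWitness_of_lt _ _ hi
        · refine le_trans ?_ (witnessTail_le_reluMaxWitness (by omega) x)
          obtain h | h : i = ⟨n - 3, by omega⟩ ∨ i = ⟨n - 2, by omega⟩ := by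
            simp only [Fin.ext_iff]; omega
          exacts [h ▸ htail.1.1, h ▸ htail.1.2]
    · refine le_trans ?_ (witnessTail_le_reluMaxWitness (by omega) x)
      fin_cases j
      exacts [htail.2.1, htail.2.2]

theorem not_inMAX_reluMaxWitness : ¬ InMAX n n (reluMaxWitness n (by omega)) := by
  rintro ⟨N, lam, a, b, hrep⟩
  have : Nonempty (Fin n) := ⟨⟨0, by omega⟩⟩
  choose ν hν c hc using fun j => exists_ne_zero_forall_dotProduct_eq (by simp) (a j)
  refine max_sup'_ne_sum_of_affineAlong (LinearMap.proj ⟨0, by omega⟩)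
    (witnessFunctional n (by omega)) (Pi.single ⟨0, by omega⟩ 1) (by simp) ?_
    (eq_zero_of_forall_witnessFunctional_eq hn) _ ν hν
    (fun j => (affineAlong_finMaxOn (a j) (b j) (hc j)).const_mul (lam j)) fun x => ?_
  · rintro (i | j)
    · simp [witnessFunctional_inl_apply, Pi.single_apply, Fin.ext_iff]
      tauto
    · have : n - 3 ≠ 0 ∧ n - 2 ≠ 0 ∧ n - 1 ≠ 0 := by omega
      fin_cases j <;> simp [witnessFunctional, Fin.ext_iff, this]
  · exact (reluMaxWitness_eq_max_sup' hn x).symm.trans (hrep x)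

end WitnessNotMax

/-- Coordinates are 0-indexed: the paper's `x_i` is `x ⟨i - 1, _⟩`. -/
theorem relu_strict_superset_max (k n : ℕ) (hk : 2 ≤ k) (hn : n = 2 ^ k)
    (f : (Fin n → ℝ) → ℝ)
    (hf : ∀ x, f x =
      max 0 (max
        (finMaxOn (Finset.univ.filter (fun i : Fin n => (i : ℕ) < n - 3)) (fun i => x i))
        (max (x ⟨n - 3, by have := Nat.two_pow_pos k; omega⟩)
             (x ⟨n - 2, by have := Nat.two_pow_pos k; omega⟩)
          + max 0 (x ⟨n - 1, by have := Nat.two_pow_pos k; omega⟩)))) :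
    InReLU n k f ∧ ¬ InMAX n (2 ^ k) f := by
  subst hn
  obtain rfl : f = reluMaxWitness (2 ^ k) (by positivity) := funext hf
  have h4 : 4 ≤ 2 ^ k := by simpa using Nat.pow_le_pow_right two_pos hk
  exact ⟨inReLU_reluMaxWitness hk, not_inMAX_reluMaxWitness h4⟩
end

section
/- Let f : ℝ^n → ℝ be a continuous piecewise linear function with p affine pieces. Then f can be written as f = g − h, where both g and h are convex continuous piecewise linear functions with at most p^{2n+1} affine pieces each. Concretely, if the pieces of f are x ↦ a_i^T x + b_i for i ∈ [p], one may take h(x) = Σ_{1 ≤ i < j ≤ p} max{a_i^T x + b_i, a_j^T x + b_j} and g = f + h. -/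
/-- A polyhedron: a finite intersection of closed halfspaces. -/
def IsPolyhedron {n : ℕ} (P : Set (Fin n → ℝ)) : Prop :=
  ∃ (m : ℕ) (A : Fin m → Fin n → ℝ) (b : Fin m → ℝ),
    P = {x | ∀ i, ∑ j, A i j * x j ≤ b i}

/-- `f ∈ CPWL_n`: `f` is continuous and there are finitely many polyhedra covering `ℝⁿ`
such that `f` is affine on each of them. -/
def IsCPWL {n : ℕ} (f : (Fin n → ℝ) → ℝ) : Prop :=
  Continuous f ∧ ∃ (N : ℕ) (P : Fin N → Set (Fin n → ℝ)),
    (∀ i, IsPolyhedron (P i)) ∧ (⋃ i, P i) = Set.univ ∧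
    ∀ i, ∃ (a : Fin n → ℝ) (c : ℝ), ∀ x ∈ P i, f x = (∑ j, a j * x j) + c

open Finset

/-- `f` agrees at every point with one of `p` affine functions. -/
def PiecesLE (n p : ℕ) (f : (Fin n → ℝ) → ℝ) : Prop :=
  ∃ (a : Fin p → Fin n → ℝ) (b : Fin p → ℝ), ∀ x, ∃ i, f x = (∑ t, a i t * x t) + b i

/-!
Restricted to a line, `f` is a continuous function that at every point agrees with one of the
restricted pieces, so near any point `t` it is bounded below by the smaller of the two pieces
through `(t, f t)` with extreme slopes, `ℓᵢ` and `ℓⱼ`. Adding `max ℓᵢ ℓⱼ` turns this bound into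
the affine minorant `ℓᵢ + ℓⱼ` (as `min + max = ℓᵢ + ℓⱼ`), while every other term of `h` is
bounded below by its active piece. Hence `g = f + h` has a local supporting line at each point,
and a continuous function on `ℝ` with this property is convex.

`h` is affine on each cell of the arrangement of the `m = p(p-1)/2` hyperplanes `ℓᵢ = ℓⱼ`.
Such an arrangement has at most `(m + 1)ⁿ ≤ p²ⁿ` sign patterns: adding one hyperplane `H` only
splits the patterns that are realised on both sides of `H`, and those are realised on `H`, an
`(n - 1)`-dimensional space. The pieces of `g` are those of `h` plus one piece of `f`.
-/

open Set Filter Topology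

def HasLocalSupportAt (φ : ℝ → ℝ) (t : ℝ) : Prop :=
  ∃ c ρ : ℝ, c + ρ * t = φ t ∧ ∀ᶠ u in 𝓝 t, c + ρ * u ≤ φ u

theorem HasLocalSupportAt.add {φ ψ : ℝ → ℝ} {t : ℝ} (hφ : HasLocalSupportAt φ t)
    (hψ : HasLocalSupportAt ψ t) : HasLocalSupportAt (fun u => φ u + ψ u) t := by
  obtain ⟨c, ρ, ht, hev⟩ := hφ
  obtain ⟨c', ρ', ht', hev'⟩ := hψ
  exact ⟨c + c', ρ + ρ', by show _ = φ t + ψ t; rw [← ht, ← ht']; ring,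
    (hev.and hev').mono fun u hu => by linarith [hu.1, hu.2]⟩

theorem HasLocalSupportAt.sum {ι : Type*} (s : Finset ι) {φ : ι → ℝ → ℝ} {t : ℝ}
    (h : ∀ i ∈ s, HasLocalSupportAt (φ i) t) :
    HasLocalSupportAt (fun u => ∑ i ∈ s, φ i u) t := by
  classical
  induction s using Finset.induction_on with
  | empty => exact ⟨0, 0, by simp, by simp⟩
  | insert i s hi ih =>
    simp only [Finset.sum_insert hi]
    exact (h i (mem_insert_self i s)).add (ih fun j hj => h j (mem_insert_of_mem hj))

theorem hasLocalSupportAt_max (c₁ ρ₁ c₂ ρ₂ t : ℝ) :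
    HasLocalSupportAt (fun u => max (c₁ + ρ₁ * u) (c₂ + ρ₂ * u)) t := by
  rcases le_total (c₂ + ρ₂ * t) (c₁ + ρ₁ * t) with h | h
  · exact ⟨c₁, ρ₁, (max_eq_left h).symm, Eventually.of_forall fun _ => le_max_left _ _⟩
  · exact ⟨c₂, ρ₂, (max_eq_right h).symm, Eventually.of_forall fun _ => le_max_right _ _⟩

theorem le_line_of_hasLocalSupportAt {φ : ℝ → ℝ} (hφ : Continuous φ)
    (hsupp : ∀ t, HasLocalSupportAt φ t) {c ρ a b : ℝ} (hab : a ≤ b)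
    (ha : φ a ≤ c + ρ * a) (hb : φ b ≤ c + ρ * b) :
    ∀ u ∈ Icc a b, φ u ≤ c + ρ * u := by
  -- at the rightmost maximiser of `φ - line`, a supporting slope would have to be at least `ρ`
  -- (looking left) and less than `ρ` (looking right)
  by_contra! ⟨u₀, hu₀, hlt⟩
  set ψ : ℝ → ℝ := fun u => φ u - (c + ρ * u) with hψ_def
  have hψ : Continuous ψ := by fun_prop
  obtain ⟨t₁, ht₁, hmax⟩ :=
    isCompact_Icc.exists_isMaxOn ⟨a, left_mem_Icc.2 hab⟩ hψ.continuousOn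
  obtain ⟨t, ⟨htI, htK⟩, hgreat⟩ :=
    (isCompact_Icc.inter_right (isClosed_singleton.preimage hψ)).exists_isGreatest
      ⟨t₁, ht₁, rfl⟩
  simp only [Set.mem_preimage, Set.mem_singleton_iff] at htK
  have hpos : 0 < ψ t := htK ▸ (sub_pos.2 hlt).trans_le (hmax hu₀)
  have hta : a < t := lt_of_le_of_ne htI.1 (by rintro rfl; simp only [hψ_def] at hpos; linarith)
  have htb : t < b := lt_of_le_of_ne htI.2 (by rintro rfl; simp only [hψ_def] at hpos; linarith)
  obtain ⟨c', ρ', ht', hev⟩ := hsupp t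
  obtain ⟨u, hu, huI⟩ := ((hev.filter_mono nhdsWithin_le_nhds).and (Ioo_mem_nhdsGT htb)).exists
  obtain ⟨v, hv, hvI⟩ := ((hev.filter_mono nhdsWithin_le_nhds).and (Ioo_mem_nhdsLT hta)).exists
  have hψu : ψ u < ψ t := by
    refine lt_of_le_of_ne (htK ▸ hmax ⟨htI.1.trans huI.1.le, huI.2.le⟩) fun h => ?_
    exact (hgreat ⟨⟨htI.1.trans huI.1.le, huI.2.le⟩, h.trans htK⟩).not_gt huI.1
  have hψv : ψ v ≤ ψ t := htK ▸ hmax ⟨hvI.1.le, hvI.2.le.trans htI.2⟩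
  simp only [hψ_def] at hψu hψv
  nlinarith [huI.1, hvI.2]

theorem convexOn_univ_of_hasLocalSupportAt {φ : ℝ → ℝ} (hφ : Continuous φ)
    (hsupp : ∀ t, HasLocalSupportAt φ t) : ConvexOn ℝ univ φ := by
  refine ⟨convex_univ, ?_⟩
  rintro x - y - α β hα hβ hαβ
  wlog hxy : x ≤ y generalizing x y α β
  · have := this hβ hα (by linarith) (le_of_not_ge hxy)
    rwa [add_comm (β • y), add_comm (β • φ y)] at this
  have hy : φ y = φ x + slope φ x y * (y - x) := by
    simpa [mul_comm, add_comm] using (sub_smul_slope_vadd φ x y).symm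
  have hmem : α • x + β • y ∈ Icc x y :=
    convex_Icc x y (left_mem_Icc.2 hxy) (right_mem_Icc.2 hxy) hα hβ hαβ
  have := le_line_of_hasLocalSupportAt hφ hsupp (c := φ x - slope φ x y * x) hxy
    (by linarith) (by linarith) _ hmem
  simp only [smul_eq_mul] at this ⊢
  linear_combination this - (φ x - slope φ x y * x) * hαβ - β * hy

section Selection

variable {ι : Type*} [Fintype ι] (c d : ι → ℝ) {F : ℝ → ℝ}

theorem exists_eventually_min_le (hF : Continuous F)
    (hpieces : ∀ u, ∃ i, F u = c i + d i * u) (t : ℝ) :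
    ∃ i j, c i + d i * t = F t ∧ c j + d j * t = F t ∧
      ∀ᶠ u in 𝓝 t, min (c i + d i * u) (c j + d j * u) ≤ F u := by
  classical
  set A := univ.filter fun k => c k + d k * t = F t with hA_def
  have hmemA : ∀ k, k ∈ A ↔ c k + d k * t = F t := by simp [hA_def]
  obtain ⟨k₀, hk₀⟩ := hpieces t
  have hA : A.Nonempty := ⟨k₀, (hmemA k₀).2 hk₀.symm⟩
  obtain ⟨i, hiA, hi⟩ := A.exists_min_image d hA
  obtain ⟨j, hjA, hj⟩ := A.exists_max_image d hA
  refine ⟨i, j, (hmemA i).1 hiA, (hmemA j).1 hjA, ?_⟩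
  have hnear : ∀ᶠ u in 𝓝 t, ∀ k, F u = c k + d k * u → k ∈ A := by
    refine eventually_all.2 fun k => ?_
    by_cases hk : k ∈ A
    · exact Eventually.of_forall fun _ _ => hk
    · have hne : F t - (c k + d k * t) ≠ 0 := sub_ne_zero.2 fun h => hk ((hmemA k).2 h.symm)
      exact ((show Continuous fun u => F u - (c k + d k * u) by fun_prop).continuousAt.eventually_ne
        hne).mono fun u hu heq => absurd (sub_eq_zero.2 heq) hu
  refine hnear.mono fun u hu => ?_
  obtain ⟨k, hk⟩ := hpieces u
  have hkA := hu k hk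
  have hik := hi k hkA
  have hkj := hj k hkA
  rw [hmemA] at hiA hjA hkA
  -- all pieces through `(t, F t)` lie between the two of extreme slopes
  rcases le_total t u with htu | hut
  · exact (min_le_left _ _).trans (by nlinarith [mul_nonneg (sub_nonneg.2 hik) (sub_nonneg.2 htu)])
  · exact (min_le_right _ _).trans (by nlinarith [mul_nonneg (sub_nonneg.2 hkj) (sub_nonneg.2 hut)])

variable [LinearOrder ι]

theorem hasLocalSupportAt_add_sum_max (hF : Continuous F)
    (hpieces : ∀ u, ∃ i, F u = c i + d i * u) (t : ℝ) :
    HasLocalSupportAt (fun u => F u + ∑ q ∈ univ.filter (fun q : ι × ι => q.1 < q.2),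
      max (c q.1 + d q.1 * u) (c q.2 + d q.2 * u)) t := by
  set P := univ.filter (fun q : ι × ι => q.1 < q.2)
  have hmax : ∀ q ∈ P, HasLocalSupportAt
      (fun u => max (c q.1 + d q.1 * u) (c q.2 + d q.2 * u)) t :=
    fun q _ => hasLocalSupportAt_max _ _ _ _ t
  -- if `F` switches between two distinct pieces at `t`, their max-term makes up for the kink
  have key : ∀ i j, i < j → c i + d i * t = F t → c j + d j * t = F t →
      (∀ᶠ u in 𝓝 t, min (c i + d i * u) (c j + d j * u) ≤ F u) →
      HasLocalSupportAt (fun u => F u + ∑ q ∈ P,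
        max (c q.1 + d q.1 * u) (c q.2 + d q.2 * u)) t := by
    intro i j hij hi hj hmin
    have hq : (i, j) ∈ P := by simp [P, hij]
    have hpair : HasLocalSupportAt
        (fun u => F u + max (c i + d i * u) (c j + d j * u)) t :=
      ⟨c i + c j, d i + d j, by show _ = F t + _; rw [hi, hj, max_self]; linarith,
        hmin.mono fun u hu => by linarith [min_add_max (c i + d i * u) (c j + d j * u)]⟩
    convert hpair.add (HasLocalSupportAt.sum _ fun q hq => hmax q (mem_of_mem_erase hq))
      using 2 with u
    rw [← add_sum_erase P _ hq, add_assoc]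
  obtain ⟨i, j, hi, hj, hmin⟩ := exists_eventually_min_le c d hF hpieces t
  rcases lt_trichotomy i j with hij | rfl | hji
  · exact key i j hij hi hj hmin
  · exact HasLocalSupportAt.add ⟨c i, d i, hi, by simpa using hmin⟩ (.sum P hmax)
  · exact key j i hji hj hi (by simpa only [min_comm] using hmin)

theorem convexOn_real_add_sum_max (hF : Continuous F)
    (hpieces : ∀ u, ∃ i, F u = c i + d i * u) :
    ConvexOn ℝ univ (fun u => F u + ∑ q ∈ univ.filter (fun q : ι × ι => q.1 < q.2),
      max (c q.1 + d q.1 * u) (c q.2 + d q.2 * u)) :=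
  convexOn_univ_of_hasLocalSupportAt (hF.add (continuous_finsetSum _ fun _ _ => by fun_prop))
    (hasLocalSupportAt_add_sum_max c d hF hpieces)

end Selection

theorem convexOn_univ_of_forall_lineMap {E : Type*} [AddCommGroup E] [Module ℝ E] {g : E → ℝ}
    (h : ∀ x y : E, ConvexOn ℝ univ fun θ : ℝ => g (AffineMap.lineMap x y θ)) :
    ConvexOn ℝ univ g := by
  refine ⟨convex_univ, ?_⟩
  rintro x - y - α β hα hβ hαβ
  have := (h x y).2 (mem_univ 0) (mem_univ 1) hα hβ hαβ
  simpa [AffineMap.lineMap_apply_module, show 1 - β = α by linarith] using this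

theorem convexOn_add_sum_max {E : Type*} [AddCommGroup E] [Module ℝ E] [TopologicalSpace E]
    [IsTopologicalAddGroup E] [ContinuousSMul ℝ E] {ι : Type*} [Fintype ι] [LinearOrder ι]
    (ℓ : ι → E →ᵃ[ℝ] ℝ) {f : E → ℝ} (hf : Continuous f) (hpieces : ∀ x, ∃ i, f x = ℓ i x) :
    ConvexOn ℝ univ (fun x => f x + ∑ q ∈ univ.filter (fun q : ι × ι => q.1 < q.2),
      max (ℓ q.1 x) (ℓ q.2 x)) := by
  refine convexOn_univ_of_forall_lineMap fun x y => ?_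
  have hℓ : ∀ i θ, ℓ i (AffineMap.lineMap x y θ) = ℓ i x + (ℓ i y - ℓ i x) * θ := fun i θ => by
    rw [AffineMap.apply_lineMap, AffineMap.lineMap_apply_ring']; ring
  simp only [hℓ]
  refine convexOn_real_add_sum_max (fun i => ℓ i x) (fun i => ℓ i y - ℓ i x)
    (hf.comp AffineMap.lineMap_continuous) fun θ => ?_
  obtain ⟨i, hi⟩ := hpieces (AffineMap.lineMap x y θ)
  exact ⟨i, hi.trans (hℓ i θ)⟩

theorem convexOn_sum_max {E : Type*} [AddCommGroup E] [Module ℝ E] {κ : Type*} (s : Finset κ)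
    (ℓ₁ ℓ₂ : κ → E →ᵃ[ℝ] ℝ) : ConvexOn ℝ univ fun x => ∑ q ∈ s, max (ℓ₁ q x) (ℓ₂ q x) := by
  classical
  have haff : ∀ ℓ : E →ᵃ[ℝ] ℝ, ConvexOn ℝ univ ℓ := fun ℓ =>
    ⟨convex_univ, fun _ _ _ _ _ _ _ _ hab => (Convex.combo_affine_apply hab).le⟩
  induction s using Finset.induction_on with
  | empty => simpa using convexOn_const (0 : ℝ) convex_univ
  | insert q s hq ih =>
    simp only [sum_insert hq]
    exact ((haff _).sup (haff _)).add ih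

section PiecewiseLinear

variable {n : ℕ}

theorem IsPolyhedron.inter {P Q : Set (Fin n → ℝ)} (hP : IsPolyhedron P) (hQ : IsPolyhedron Q) :
    IsPolyhedron (P ∩ Q) := by
  obtain ⟨m₁, A₁, b₁, rfl⟩ := hP
  obtain ⟨m₂, A₂, b₂, rfl⟩ := hQ
  refine ⟨m₁ + m₂, Fin.append A₁ A₂, Fin.append b₁ b₂, ?_⟩
  ext x
  simp [Fin.forall_fin_add, Fin.append_left, Fin.append_right]

theorem isPolyhedron_univ : IsPolyhedron (univ : Set (Fin n → ℝ)) :=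
  ⟨0, Fin.elim0, Fin.elim0, by simp⟩

theorem isPolyhedron_halfspace (v : Fin n → ℝ) (c : ℝ) : IsPolyhedron {x | v ⬝ᵥ x ≤ c} :=
  ⟨1, fun _ => v, fun _ => c, by simp [dotProduct]⟩

theorem isCPWL_iff {f : (Fin n → ℝ) → ℝ} :
    IsCPWL f ↔ Continuous f ∧ ∃ (N : ℕ) (P : Fin N → Set (Fin n → ℝ)),
      (∀ i, IsPolyhedron (P i)) ∧ ⋃ i, P i = univ ∧
      ∀ i, ∃ (a : Fin n → ℝ) (c : ℝ), ∀ x ∈ P i, f x = a ⬝ᵥ x + c :=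
  Iff.rfl

theorem isCPWL_of_finite_cover {ι : Type*} [Finite ι] {f : (Fin n → ℝ) → ℝ} (hf : Continuous f)
    (P : ι → Set (Fin n → ℝ)) (hP : ∀ i, IsPolyhedron (P i)) (hcover : ⋃ i, P i = univ)
    (haff : ∀ i, ∃ (a : Fin n → ℝ) (c : ℝ), ∀ x ∈ P i, f x = a ⬝ᵥ x + c) : IsCPWL f := by
  let e := Finite.equivFin ι
  exact ⟨hf, Nat.card ι, P ∘ e.symm, fun i => hP _,
    (e.symm.surjective.iUnion_comp P).trans hcover, fun i => haff _⟩

theorem isCPWL_affine (a : Fin n → ℝ) (c : ℝ) : IsCPWL fun x => a ⬝ᵥ x + c :=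
  isCPWL_of_finite_cover (ι := Unit) (by fun_prop) (fun _ => univ) (fun _ => isPolyhedron_univ)
    (iUnion_const _) fun _ => ⟨a, c, fun _ _ => rfl⟩

theorem IsCPWL.add {f g : (Fin n → ℝ) → ℝ} (hf : IsCPWL f) (hg : IsCPWL g) :
    IsCPWL fun x => f x + g x := by
  obtain ⟨hfc, N, P, hP, hPcover, hPaff⟩ := isCPWL_iff.1 hf
  obtain ⟨hgc, M, Q, hQ, hQcover, hQaff⟩ := isCPWL_iff.1 hg
  refine isCPWL_of_finite_cover (hfc.add hgc) (fun ij : Fin N × Fin M => P ij.1 ∩ Q ij.2)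
    (fun ij => (hP _).inter (hQ _)) (eq_univ_of_forall fun x => ?_) fun ij => ?_
  · obtain ⟨i, hi⟩ := mem_iUnion.1 (hPcover ▸ mem_univ x)
    obtain ⟨j, hj⟩ := mem_iUnion.1 (hQcover ▸ mem_univ x)
    exact mem_iUnion.2 ⟨(i, j), hi, hj⟩
  · obtain ⟨a, c, hac⟩ := hPaff ij.1
    obtain ⟨a', c', hac'⟩ := hQaff ij.2
    refine ⟨a + a', c + c', fun x hx => ?_⟩
    rw [hac x hx.1, hac' x hx.2, add_dotProduct]
    ring

theorem IsCPWL.max {f g : (Fin n → ℝ) → ℝ} (hf : IsCPWL f) (hg : IsCPWL g) :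
    IsCPWL fun x => max (f x) (g x) := by
  obtain ⟨hfc, N, P, hP, hPcover, hPaff⟩ := isCPWL_iff.1 hf
  obtain ⟨hgc, M, Q, hQ, hQcover, hQaff⟩ := isCPWL_iff.1 hg
  choose a c hac using hPaff
  choose a' c' hac' using hQaff
  -- each cell `P i ∩ Q j` is cut by the hyperplane where the two affine pieces agree
  let R : (Fin N × Fin M) ⊕ (Fin N × Fin M) → Set (Fin n → ℝ) :=
    Sum.elim (fun ij => P ij.1 ∩ Q ij.2 ∩ {x | (a ij.1 - a' ij.2) ⬝ᵥ x ≤ c' ij.2 - c ij.1})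
      (fun ij => P ij.1 ∩ Q ij.2 ∩ {x | (a' ij.2 - a ij.1) ⬝ᵥ x ≤ c ij.1 - c' ij.2})
  refine isCPWL_of_finite_cover (hfc.max hgc) R ?_ (eq_univ_of_forall fun x => ?_) ?_
  · rintro (ij | ij) <;> exact ((hP _).inter (hQ _)).inter (isPolyhedron_halfspace _ _)
  · obtain ⟨i, hi⟩ := mem_iUnion.1 (hPcover ▸ mem_univ x)
    obtain ⟨j, hj⟩ := mem_iUnion.1 (hQcover ▸ mem_univ x)
    have hfx := hac i x hi
    have hgx := hac' j x hj
    rcases le_total (f x) (g x) with hle | hle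
    · refine mem_iUnion.2 ⟨.inl (i, j), ⟨hi, hj⟩, ?_⟩
      simp only [mem_ofPred_eq, sub_dotProduct]
      linarith
    · refine mem_iUnion.2 ⟨.inr (i, j), ⟨hi, hj⟩, ?_⟩
      simp only [mem_ofPred_eq, sub_dotProduct]
      linarith
  · rintro (⟨i, j⟩ | ⟨i, j⟩)
    · refine ⟨a' j, c' j, fun x ⟨⟨hi, hj⟩, hx⟩ => ?_⟩
      simp only [mem_ofPred_eq, sub_dotProduct] at hx
      rw [hac' _ x hj, max_eq_right (by rw [hac _ x hi]; linarith)]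
    · refine ⟨a i, c i, fun x ⟨⟨hi, hj⟩, hx⟩ => ?_⟩
      simp only [mem_ofPred_eq, sub_dotProduct] at hx
      rw [hac _ x hi, max_eq_left (by rw [hac' _ x hj]; linarith)]

theorem IsCPWL.sum {κ : Type*} (s : Finset κ) {F : κ → (Fin n → ℝ) → ℝ}
    (h : ∀ q ∈ s, IsCPWL (F q)) : IsCPWL fun x => ∑ q ∈ s, F q x := by
  classical
  induction s using Finset.induction_on with
  | empty => simpa using isCPWL_affine 0 0
  | insert q s hq ih =>
    simp only [Finset.sum_insert hq]
    exact (h q (Finset.mem_insert_self q s)).add (ih fun r hr => h r (Finset.mem_insert_of_mem hr))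

theorem PiecesLE.of_finite {ι : Type*} [Finite ι] {f : (Fin n → ℝ) → ℝ}
    (a : ι → Fin n → ℝ) (b : ι → ℝ) (h : ∀ x, ∃ i, f x = a i ⬝ᵥ x + b i) :
    PiecesLE n (Nat.card ι) f := by
  let e := Finite.equivFin ι
  refine ⟨a ∘ e.symm, b ∘ e.symm, fun x => ?_⟩
  obtain ⟨i, hi⟩ := h x
  exact ⟨e i, by simpa [dotProduct] using hi⟩

theorem PiecesLE.mono {K K' : ℕ} {f : (Fin n → ℝ) → ℝ} (hf : PiecesLE n K f) (hK : K ≤ K') :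
    PiecesLE n K' f := by
  obtain ⟨a, b, h⟩ := hf
  refine ⟨fun i => if hi : (i : ℕ) < K then a ⟨i, hi⟩ else 0,
    fun i => if hi : (i : ℕ) < K then b ⟨i, hi⟩ else 0, fun x => ?_⟩
  obtain ⟨i, hi⟩ := h x
  exact ⟨Fin.castLE hK i, by simpa using hi⟩

theorem PiecesLE.add {K K' : ℕ} {f g : (Fin n → ℝ) → ℝ} (hf : PiecesLE n K f)
    (hg : PiecesLE n K' g) : PiecesLE n (K * K') fun x => f x + g x := by
  obtain ⟨a, b, hab⟩ := hf
  obtain ⟨a', b', hab'⟩ := hg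
  have := PiecesLE.of_finite (ι := Fin K × Fin K') (f := fun x => f x + g x)
    (fun ij => a ij.1 + a' ij.2) (fun ij => b ij.1 + b' ij.2) fun x => ?_
  · simpa using this
  obtain ⟨i, hi⟩ := hab x
  obtain ⟨j, hj⟩ := hab' x
  exact ⟨(i, j), by rw [hi, hj, add_dotProduct]; simp only [dotProduct]; ring⟩

end PiecewiseLinear

section Arrangement

variable {V : Type*} [AddCommGroup V] [Module ℝ V] {ι : Type*}

noncomputable def signPattern (φ : ι → Module.Dual ℝ V) (c : ι → ℝ) (S : Finset ι) (x : V) :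
    Finset ι :=
  {k ∈ S | φ k x ≤ c k}

theorem finite_range_signPattern (φ : ι → Module.Dual ℝ V) (c : ι → ℝ) (S : Finset ι) :
    (range (signPattern φ c S)).Finite :=
  S.powerset.finite_toSet.subset <| range_subset_iff.2 fun _ => mem_powerset.2 (filter_subset _ _)

theorem exists_signPattern_eq_of_lt {φ : ι → Module.Dual ℝ V} {c : ι → ℝ} {S : Finset ι} {k : ι}
    {x₁ x₂ : V} (h₁ : φ k x₁ ≤ c k) (h₂ : c k < φ k x₂)
    (h : signPattern φ c S x₁ = signPattern φ c S x₂) :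
    ∃ z, φ k z = c k ∧ signPattern φ c S z = signPattern φ c S x₁ := by
  set θ := (c k - φ k x₁) / (φ k x₂ - φ k x₁)
  have hd : 0 < φ k x₂ - φ k x₁ := by linarith
  have hθ₀ : 0 ≤ θ := div_nonneg (by linarith) hd.le
  have hθ₁ : θ ≤ 1 := (div_le_one hd).2 (by linarith)
  have hz : ∀ j, φ j (x₁ + θ • (x₂ - x₁)) = (1 - θ) * φ j x₁ + θ * φ j x₂ := fun j => by
    simp only [map_add, map_smul, map_sub, smul_eq_mul]; ring
  have hθ : θ * (φ k x₂ - φ k x₁) = c k - φ k x₁ := div_mul_cancel₀ _ hd.ne'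
  refine ⟨x₁ + θ • (x₂ - x₁), by rw [hz]; linear_combination hθ, filter_congr fun j hjS => ?_⟩
  have hj : φ j x₁ ≤ c j ↔ φ j x₂ ≤ c j := by simpa [signPattern, hjS] using Finset.ext_iff.1 h j
  rw [hz]
  by_cases hle : φ j x₁ ≤ c j
  · exact iff_of_true ((Convex.combo_le_max _ _ (sub_nonneg.2 hθ₁) hθ₀ (by ring)).trans
      (max_le hle (hj.1 hle))) hle
  · refine iff_of_false (not_le.2 ((lt_min (not_le.1 hle) (not_le.1 (hj.not.1 hle))).trans_le
      (Convex.min_le_combo _ _ (sub_nonneg.2 hθ₁) hθ₀ (by ring)))) hle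

theorem ncard_range_signPattern_insert_le [DecidableEq ι] (φ : ι → Module.Dual ℝ V) (c : ι → ℝ)
    (S : Finset ι) (k : ι) :
    (range (signPattern φ c (insert k S))).ncard ≤ (range (signPattern φ c S)).ncard +
      (signPattern φ c S '' {x | φ k x ≤ c k} ∩ signPattern φ c S '' {x | c k < φ k x}).ncard := by
  set A := signPattern φ c S '' {x | φ k x ≤ c k}
  set B := signPattern φ c S '' {x | c k < φ k x}
  have hsplit : range (signPattern φ c (insert k S)) ⊆ insert k '' A ∪ B := by
    rintro _ ⟨x, rfl⟩
    rcases le_or_gt (φ k x) (c k) with h | h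
    · exact Or.inl ⟨_, ⟨x, h, rfl⟩, by simp [signPattern, filter_insert, h]⟩
    · exact Or.inr ⟨x, h, by simp [signPattern, filter_insert, not_le.2 h]⟩
  have hAB : A ∪ B ⊆ range (signPattern φ c S) := union_subset (image_subset_range _ _)
    (image_subset_range _ _)
  have hfin := finite_range_signPattern φ c S
  have hA : A.Finite := hfin.subset (subset_union_left.trans hAB)
  have hB : B.Finite := hfin.subset (subset_union_right.trans hAB)
  calc _ ≤ (insert k '' A ∪ B).ncard := ncard_le_ncard hsplit ((hA.image _).union hB)
    _ ≤ (insert k '' A).ncard + B.ncard := ncard_union_le _ _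
    _ ≤ A.ncard + B.ncard := Nat.add_le_add_right (ncard_image_le hA) _
    _ = (A ∪ B).ncard + (A ∩ B).ncard := (ncard_union_add_ncard_inter _ _ hA hB).symm
    _ ≤ _ := Nat.add_le_add_right (ncard_le_ncard hAB hfin) _

theorem image_inter_image_signPattern_subset {φ : ι → Module.Dual ℝ V} {c : ι → ℝ}
    (S : Finset ι) {k : ι} {x₀ : V} (hx₀ : φ k x₀ = c k) :
    signPattern φ c S '' {x | φ k x ≤ c k} ∩ signPattern φ c S '' {x | c k < φ k x} ⊆
      range (signPattern (fun j => (φ j).comp (LinearMap.ker (φ k)).subtype)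
        (fun j => c j - φ j x₀) S) := by
  rintro T ⟨⟨x₁, h₁, rfl⟩, ⟨x₂, h₂, hx⟩⟩
  obtain ⟨z, hz, hzT⟩ := exists_signPattern_eq_of_lt h₁ h₂ hx.symm
  refine ⟨⟨z - x₀, by simp [hz, hx₀]⟩, Eq.trans ?_ hzT⟩
  simp [signPattern]

theorem ncard_range_signPattern_le [FiniteDimensional ℝ V] (φ : ι → Module.Dual ℝ V)
    (c : ι → ℝ) (S : Finset ι) :
    (range (signPattern φ c S)).ncard ≤ (S.card + 1) ^ Module.finrank ℝ V := by
  classical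
  induction S using Finset.induction_on generalizing V c with
  | empty =>
    rw [show signPattern φ c ∅ = fun _ => ∅ from funext fun _ => filter_empty _, range_const,
      ncard_singleton]
    simp
  | insert k S hk ih =>
    set m := S.card
    rw [card_insert_of_notMem hk]
    refine (ncard_range_signPattern_insert_le φ c S k).trans ?_
    by_cases hφ : φ k = 0
    · -- the last halfspace is `∅` or everything, so no pattern is realised on both sides
      have hempty : signPattern φ c S '' {x | φ k x ≤ c k} ∩
          signPattern φ c S '' {x | c k < φ k x} = ∅ := by
        refine eq_empty_iff_forall_notMem.2 ?_
        rintro T ⟨⟨x₁, h₁, -⟩, ⟨x₂, h₂, -⟩⟩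
        simp only [mem_ofPred_eq, hφ, LinearMap.zero_apply] at h₁ h₂
        linarith
      rw [hempty, ncard_empty, add_zero]
      exact (ih φ c).trans (Nat.pow_le_pow_left (by omega) _)
    · obtain ⟨x₀, hx₀⟩ := LinearMap.surjective hφ (c k)
      have hK := Module.Dual.finrank_ker_add_one_of_ne_zero hφ
      set e := Module.finrank ℝ (LinearMap.ker (φ k))
      calc _ ≤ (m + 1) ^ Module.finrank ℝ V + (m + 1) ^ e :=
          add_le_add (ih φ c) ((ncard_le_ncard (image_inter_image_signPattern_subset S hx₀)
            (finite_range_signPattern _ _ _)).trans (ih _ _))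
        _ ≤ (m + 1 + 1) ^ Module.finrank ℝ V := by
          rw [← hK, pow_succ, pow_succ]
          nlinarith [Nat.pow_le_pow_left (Nat.le_succ (m + 1)) e]

end Arrangement

theorem card_filter_lt_lt_sq {ι : Type*} [Fintype ι] [LinearOrder ι] [Nonempty ι] :
    #(univ.filter fun q : ι × ι => q.1 < q.2) < Fintype.card ι * Fintype.card ι := by
  obtain ⟨i⟩ := ‹Nonempty ι›
  rw [← Fintype.card_prod, ← card_univ]
  exact card_lt_card (filter_ssubset.2 ⟨(i, i), mem_univ _, lt_irrefl i⟩)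

theorem piecesLE_sum_max {n p : ℕ} (a : Fin p → Fin n → ℝ) (b : Fin p → ℝ) (hp : 0 < p) :
    PiecesLE n (p ^ (2 * n)) fun x => ∑ q ∈ univ.filter (fun q : Fin p × Fin p => q.1 < q.2),
      max (a q.1 ⬝ᵥ x + b q.1) (a q.2 ⬝ᵥ x + b q.2) := by
  set P := univ.filter (fun q : Fin p × Fin p => q.1 < q.2)
  set pat := signPattern (fun q => dotProductEquiv ℝ (Fin n) (a q.2 - a q.1))
    (fun q => b q.1 - b q.2) P
  -- the pattern of `x` records, for each pair, which of the two pieces is the larger one at `x`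
  let sel : Finset (Fin p × Fin p) → Fin p × Fin p → Fin p := fun T q => if q ∈ T then q.1 else q.2
  have hmax : ∀ x, ∀ q ∈ P, max (a q.1 ⬝ᵥ x + b q.1) (a q.2 ⬝ᵥ x + b q.2) =
      a (sel (pat x) q) ⬝ᵥ x + b (sel (pat x) q) := by
    intro x q hq
    by_cases hle : (a q.2 - a q.1) ⬝ᵥ x ≤ b q.1 - b q.2
    · have hmem : q ∈ pat x := mem_filter.2 ⟨hq, hle⟩
      rw [sub_dotProduct] at hle
      simp only [sel, hmem, if_true]
      exact max_eq_left (by linarith)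
    · have hmem : q ∉ pat x := fun h => hle (mem_filter.1 h).2
      rw [sub_dotProduct] at hle
      simp only [sel, hmem, if_false]
      exact max_eq_right (by linarith)
  have : Finite (range pat) := (finite_range_signPattern _ _ _).to_subtype
  have : Nonempty (Fin p) := ⟨⟨0, hp⟩⟩
  refine (PiecesLE.of_finite (ι := range pat) (fun T => ∑ q ∈ P, a (sel T q))
    (fun T => ∑ q ∈ P, b (sel T q)) fun x => ⟨⟨pat x, x, rfl⟩, ?_⟩).mono ?_
  · rw [sum_congr rfl (hmax x), sum_add_distrib, sum_dotProduct]
  calc Nat.card (range pat) = (range pat).ncard := Nat.card_coe_set_eq _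
    _ ≤ (#P + 1) ^ n := by
      simpa using ncard_range_signPattern_le (V := Fin n → ℝ) _ _ P
    _ ≤ (p * p) ^ n := Nat.pow_le_pow_left (by simpa using card_filter_lt_lt_sq (ι := Fin p)) n
    _ = p ^ (2 * n) := by ring

theorem decomposition_convex_difference_general (n p : ℕ) (hp : 0 < p)
    (f : (Fin n → ℝ) → ℝ) (hcpwl : IsCPWL f)
    (a : Fin p → Fin n → ℝ) (b : Fin p → ℝ)
    (hpieces : ∀ x, ∃ i, f x = (∑ t, a i t * x t) + b i)
    (g h : (Fin n → ℝ) → ℝ)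
    (hh : ∀ x, h x = ∑ q ∈ Finset.univ.filter (fun q : Fin p × Fin p => q.1 < q.2),
        max ((∑ t, a q.1 t * x t) + b q.1) ((∑ t, a q.2 t * x t) + b q.2))
    (hg : ∀ x, g x = f x + h x) :
    ConvexOn ℝ Set.univ g ∧ ConvexOn ℝ Set.univ h ∧
      IsCPWL g ∧ IsCPWL h ∧
      PiecesLE n (p ^ (2 * n + 1)) g ∧ PiecesLE n (p ^ (2 * n + 1)) h ∧
      ∀ x, f x = g x - h x := by
  obtain rfl : h = _ := funext hh
  obtain rfl : g = _ := funext hg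
  let ℓ : Fin p → (Fin n → ℝ) →ᵃ[ℝ] ℝ := fun i =>
    (dotProductEquiv ℝ (Fin n) (a i)).toAffineMap + AffineMap.const ℝ _ (b i)
  have hcpwl_h := IsCPWL.sum (univ.filter fun q : Fin p × Fin p => q.1 < q.2) fun q _ =>
    (isCPWL_affine (a q.1) (b q.1)).max (isCPWL_affine (a q.2) (b q.2))
  have hpieces_h := piecesLE_sum_max a b hp
  refine ⟨convexOn_add_sum_max ℓ hcpwl.1 hpieces,
    convexOn_sum_max _ (fun q : Fin p × Fin p => ℓ q.1) (fun q => ℓ q.2), hcpwl.add hcpwl_h,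
    hcpwl_h, ?_, hpieces_h.mono (Nat.pow_le_pow_right hp (by omega)), fun x => by ring⟩
  rw [pow_succ']
  exact PiecesLE.add ⟨a, b, hpieces⟩ hpieces_h

/-- let `f : ℝⁿ → ℝ` be CPWL with exactly `p` affine pieces
`x ↦ ⟨a i, x⟩ + b i`. Set `h(x) = Σ_{i<j} max{⟨a i, x⟩ + b i, ⟨a j, x⟩ + b j}` and
`g = f + h`. Then `g` and `h` are convex CPWL functions with at most `p^{2n+1}` affine
pieces each, and `f = g − h`. -/
theorem decomposition_convex_difference (n p : ℕ) (hp : 0 < p)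
    (f : (Fin n → ℝ) → ℝ) (hcpwl : IsCPWL f)
    (a : Fin p → Fin n → ℝ) (b : Fin p → ℝ)
    (hpieces : ∀ x, ∃ i, f x = (∑ t, a i t * x t) + b i)
    (hmin : ∀ q, PiecesLE n q f → p ≤ q)
    (g h : (Fin n → ℝ) → ℝ)
    (hh : ∀ x, h x = ∑ q ∈ Finset.univ.filter (fun q : Fin p × Fin p => q.1 < q.2),
        max ((∑ t, a q.1 t * x t) + b q.1) ((∑ t, a q.2 t * x t) + b q.2))
    (hg : ∀ x, g x = f x + h x) :
    ConvexOn ℝ Set.univ g ∧ ConvexOn ℝ Set.univ h ∧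
      IsCPWL g ∧ IsCPWL h ∧
      PiecesLE n (p ^ (2 * n + 1)) g ∧ PiecesLE n (p ^ (2 * n + 1)) h ∧
      ∀ x, f x = g x - h x :=
  decomposition_convex_difference_general n p hp f hcpwl a b hpieces g h hh hg
end

section
/- Given p > n+1 vectors z_1, …, z_p ∈ ℝ^{n+1}, there exists a nonempty proper subset U ⊊ [p] with the following property: there is no vector c ∈ ℝ^{n+1} with last coordinate c_{n+1} ≥ 0 and no scalar γ ∈ ℝ such that c^T z_i > γ for all i ∈ U and c^T z_i ≤ γ for all i ∈ [p] ∖ U. -/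
open Finset

lemma radon_key (n p : ℕ) (z : Fin p → Fin (n + 1) → ℝ) (lam : Fin p → ℝ)
    (h0 : ∑ i, lam i = 0)
    (h1 : ∀ t : Fin n, ∑ i, lam i * z i t.castSucc = 0)
    (h2 : ∑ i, lam i * z i (Fin.last n) ≤ 0)
    (hpos : ∃ i, 0 < lam i) (hneg : ∃ i, lam i < 0) :
    ∃ U : Finset (Fin p), U.Nonempty ∧ U ≠ Finset.univ ∧
      ¬∃ (c : Fin (n + 1) → ℝ) (γ : ℝ), 0 ≤ c (Fin.last n) ∧
        (∀ i ∈ U, γ < ∑ t, c t * z i t) ∧ (∀ i ∉ U, ∑ t, c t * z i t ≤ γ) := by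
  obtain ⟨ip, hip⟩ := hpos
  obtain ⟨im, him⟩ := hneg
  refine ⟨univ.filter (fun i => 0 < lam i), ⟨ip, by simp [hip]⟩, ?_, ?_⟩
  · intro h
    have : im ∈ univ.filter (fun i => 0 < lam i) := by rw [h]; exact mem_univ im
    simp at this; linarith
  rintro ⟨c, γ, hc, hU, hUc⟩
  set S := ∑ i, lam i * ((∑ t, c t * z i t) - γ) with hS
  have hSpos : 0 < S := by
    refine Finset.sum_pos' (fun i _ => ?_) ⟨ip, mem_univ ip, ?_⟩
    · by_cases hi : 0 < lam i
      · have := hU i (by simp [hi])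
        nlinarith
      · push_neg at hi
        have := hUc i (by simp [not_lt.mpr hi])
        nlinarith
    · have := hU ip (by simp [hip])
      nlinarith
  have hsplit : S = ∑ i, lam i * (∑ t, c t * z i t) := by
    simp only [hS, mul_sub, Finset.sum_sub_distrib, ← Finset.sum_mul, h0]
    ring
  have hswap : S = ∑ t, c t * (∑ i, lam i * z i t) := by
    rw [hsplit]
    simp_rw [Finset.mul_sum]
    rw [Finset.sum_comm]
    exact Finset.sum_congr rfl fun t _ => Finset.sum_congr rfl fun i _ => by ring
  have hSnonpos : S ≤ 0 := by
    rw [hswap, Fin.sum_univ_castSucc]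
    have he : ∀ t : Fin n, c t.castSucc * (∑ i, lam i * z i t.castSucc) = 0 := by
      intro t; rw [h1 t, mul_zero]
    rw [Finset.sum_congr rfl (fun t _ => he t), Finset.sum_const, smul_zero, zero_add]
    exact mul_nonpos_of_nonneg_of_nonpos hc h2
  linarith

/-- given `p > n+1` vectors `z₁, …, z_p ∈ ℝ^{n+1}`, there is a nonempty
proper subset `U ⊊ [p]` such that no `c ∈ ℝ^{n+1}` with last coordinate `c_{n+1} ≥ 0` and
no `γ ∈ ℝ` satisfy `⟨c, z i⟩ > γ` for all `i ∈ U` and `⟨c, z i⟩ ≤ γ` for all `i ∉ U`. -/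
theorem radon_type_separation (n p : ℕ) (hp : n + 1 < p) (z : Fin p → Fin (n + 1) → ℝ) :
    ∃ U : Finset (Fin p), U.Nonempty ∧ U ≠ Finset.univ ∧
      ¬∃ (c : Fin (n + 1) → ℝ) (γ : ℝ), 0 ≤ c (Fin.last n) ∧
        (∀ i ∈ U, γ < ∑ t, c t * z i t) ∧ (∀ i ∉ U, ∑ t, c t * z i t ≤ γ) := by
  have hdep : ¬ LinearIndependent ℝ
      (fun i : Fin p => ((fun t => z i t.castSucc, 1) : (Fin n → ℝ) × ℝ)) := by
    intro h
    have := h.fintype_card_le_finrank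
    simp [Module.finrank_prod] at this
    omega
  obtain ⟨lam, hsum, i0, hi0⟩ := Fintype.not_linearIndependent_iff.mp hdep
  have h1 : ∀ t : Fin n, ∑ i, lam i * z i t.castSucc = 0 := by
    intro t
    have := congrArg (fun x => x.1 t) hsum
    simpa [Prod.fst_sum, Finset.sum_apply, smul_eq_mul] using this
  have h0 : ∑ i, lam i = 0 := by
    have := congrArg Prod.snd hsum
    simpa [Prod.snd_sum] using this
  have hpos : ∃ i, 0 < lam i := by
    by_contra h
    push_neg at h
    exact hi0 ((Finset.sum_eq_zero_iff_of_nonpos (fun i _ => h i)).mp h0 i0 (mem_univ i0))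
  have hneg : ∃ i, lam i < 0 := by
    by_contra h
    push_neg at h
    exact hi0 ((Finset.sum_eq_zero_iff_of_nonneg (fun i _ => h i)).mp h0 i0 (mem_univ i0))
  rcases le_or_gt (∑ i, lam i * z i (Fin.last n)) 0 with h2 | h2
  · exact radon_key n p z lam h0 h1 h2 hpos hneg
  · refine radon_key n p z (fun i => -lam i) (by simpa using h0) (fun t => ?_) ?_
      (hneg.imp fun i hi => by simpa using hi) (hpos.imp fun i hi => by simpa using hi)
    · simp only [neg_mul, Finset.sum_neg_distrib, h1 t, neg_zero]
    · simp only [neg_mul, Finset.sum_neg_distrib]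
      linarith
end

section
/- Let n, k ∈ ℕ. A positively homogeneous (not necessarily convex) continuous piecewise linear function f : ℝ^n → ℝ can be computed by a ReLU neural network with k hidden layers if and only if f can be written as f = g − h, where g and h are positively homogeneous convex continuous piecewise linear functions whose Newton polytopes N̄(g) and N̄(h) both belong to the class Newt_n^(k). -/
/-!
A hidden neuron computes `relu (g - h) = max g h - h`. Hence, by induction on the depth, every
neuron of a `k`-layer network is a difference of two maxima of affine functions whose Newton
polytopes lie in `Newt n k`: affine combinations preserve this after splitting coefficients by
sign, and `max` of two such maxima has Newton polytope `conv (P ∪ Q)`. Positive homogeneity then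
removes the biases: a maximum of affine functions stays within bounded distance of the support
function of its Newton polytope, and a bounded positively homogeneous function vanishes.

Conversely, support functions turn Minkowski sums into sums and `conv (P ∪ Q)` into maxima, and
one hidden layer computes `max a b = relu (a - b) + relu b - relu (-b)`; so, by induction on `k`, a
bias-free network has the support functions of any finitely many polytopes of `Newt n k` among
its linear readouts.
-/

open Finset

open Pointwise in
/-- The classes `Newt_n^(k)` of polytopes in `ℝⁿ`: `Newt_n^(0)` consists of the one-point
polytopes, and `Newt_n^(k+1)` consists of all finite Minkowski sums
`Σᵢ conv(Pᵢ ∪ Qᵢ)` with `Pᵢ, Qᵢ ∈ Newt_n^(k)`. -/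
def Newt (n : ℕ) : ℕ → Set (Set (Fin n → ℝ))
  | 0 => {P | ∃ a : Fin n → ℝ, P = {a}}
  | k + 1 => {P | ∃ (p : ℕ) (Q R : Fin p → Set (Fin n → ℝ)),
      (∀ i, Q i ∈ Newt n k) ∧ (∀ i, R i ∈ Newt n k) ∧
      P = ∑ i : Fin p, convexHull ℝ (Q i ∪ R i)}

/-- `g` is a positively homogeneous convex CPWL function (written as a maximum of linear
functions `x ↦ ⟨a i, x⟩`) whose Newton polytope `N̄(g) = conv{a₁, …, a_p}` lies in
`Newt_n^(k)`. -/
def ConvexWithNewtonIn (n k : ℕ) (g : (Fin n → ℝ) → ℝ) : Prop :=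
  ∃ (p : ℕ) (a : Fin p → Fin n → ℝ), 0 < p ∧
    (∀ x, g x = finMaxOn Finset.univ (fun i => ∑ t, a i t * x t)) ∧
    convexHull ℝ (Set.range a) ∈ Newt n k


open Pointwise

section Homogeneous

variable {E : Type*} [AddCommGroup E] [Module ℝ E]

def PosHomogeneous (φ : E → ℝ) : Prop :=
  ∀ t : ℝ, 0 ≤ t → ∀ x, φ (t • x) = t * φ x

lemma PosHomogeneous.sub {φ ψ : E → ℝ} (hφ : PosHomogeneous φ) (hψ : PosHomogeneous ψ) :
    PosHomogeneous (φ - ψ) := fun t ht x => by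
  simp only [Pi.sub_apply, hφ t ht, hψ t ht, mul_sub]

lemma PosHomogeneous.relu {φ : E → ℝ} (hφ : PosHomogeneous φ) :
    PosHomogeneous (fun x => max 0 (φ x)) := fun t ht x => by
  show max 0 (φ (t • x)) = t * max 0 (φ x)
  rw [hφ t ht x, mul_max_of_nonneg _ _ ht, mul_zero]

lemma PosHomogeneous.eq_zero_of_abs_le {φ : E → ℝ} (hφ : PosHomogeneous φ) {B : ℝ}
    (hB : ∀ x, |φ x| ≤ B) (x : E) : φ x = 0 := by
  by_contra hx
  have hpos : 0 < |φ x| := abs_pos.2 hx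
  have hB0 : 0 ≤ B := (abs_nonneg _).trans (hB x)
  have ht : 0 ≤ (B + 1) / |φ x| := by positivity
  have := hB (((B + 1) / |φ x|) • x)
  rw [hφ _ ht, abs_mul, abs_of_nonneg ht, div_mul_cancel₀ _ hpos.ne'] at this
  linarith

end Homogeneous

section FiniteSup

variable {ι κ : Type*} [Finite ι] [Nonempty ι] [Finite κ] [Nonempty κ]

lemma ciSup_sum_elim (u : ι → ℝ) (v : κ → ℝ) :
    ⨆ z, Sum.elim u v z = (⨆ i, u i) ⊔ ⨆ j, v j :=
  le_antisymm
    (ciSup_le fun z => z.rec (fun i => le_sup_of_le_left (Finite.le_ciSup u i))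
      (fun j => le_sup_of_le_right (Finite.le_ciSup v j)))
    (sup_le (ciSup_le fun i => Finite.le_ciSup (Sum.elim u v) (.inl i))
      (ciSup_le fun j => Finite.le_ciSup (Sum.elim u v) (.inr j)))

lemma ciSup_add_ciSup_eq (u : ι → ℝ) (v : κ → ℝ) :
    ⨆ z : ι × κ, u z.1 + v z.2 = (⨆ i, u i) + ⨆ j, v j := by
  rw [Finite.ciSup_prod, ciSup_add (Finite.bddAbove_range u)]
  exact iSup_congr fun i => (add_ciSup (Finite.bddAbove_range v) (u i)).symm

lemma abs_ciSup_add_sub_ciSup_le (u β : ι → ℝ) :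
    |(⨆ i, u i + β i) - ⨆ i, u i| ≤ ⨆ i, |β i| := by
  have hβ (i : ι) : |β i| ≤ ⨆ i, |β i| := Finite.le_ciSup (fun i => |β i|) i
  rw [abs_sub_le_iff, sub_le_iff_le_add', sub_le_iff_le_add']
  constructor
  · refine ciSup_le fun i => add_le_add (Finite.le_ciSup u i) ((le_abs_self _).trans (hβ i))
  · refine ciSup_le fun i => ?_
    have := Finite.le_ciSup (fun i => u i + β i) i
    linarith [neg_abs_le (β i), hβ i]

end FiniteSup

section SupportFunction

variable {σ : Type*} [Fintype σ]

noncomputable def supportFun (P : Set (σ → ℝ)) (x : σ → ℝ) : ℝ :=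
  sSup ((· ⬝ᵥ x) '' P)

lemma posHomogeneous_supportFun (P : Set (σ → ℝ)) : PosHomogeneous (supportFun P) := by
  intro t ht x
  have : (· ⬝ᵥ t • x) '' P = t • ((· ⬝ᵥ x) '' P) := by
    simp only [← Set.image_smul, Set.image_image, dotProduct_smul]
  rw [supportFun, supportFun, this, Real.sSup_smul_of_nonneg ht, smul_eq_mul]

lemma supportFun_convexHull_range {ι : Type*} [Finite ι] [Nonempty ι] (a : ι → σ → ℝ)
    (x : σ → ℝ) : supportFun (convexHull ℝ (Set.range a)) x = ⨆ i, a i ⬝ᵥ x := by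
  refine IsGreatest.csSup_eq ⟨?_, ?_⟩
  · obtain ⟨i, hi⟩ := exists_eq_ciSup_of_finite (f := fun i => a i ⬝ᵥ x)
    exact ⟨a i, subset_convexHull ℝ _ ⟨i, rfl⟩, hi⟩
  · have hlin : IsLinearMap ℝ (· ⬝ᵥ x) :=
      ⟨fun y z => add_dotProduct y z x, fun c y => smul_dotProduct c y x⟩
    rintro _ ⟨y, hy, rfl⟩
    refine convexHull_min ?_ (convex_halfSpace_le hlin _) hy
    rintro _ ⟨i, rfl⟩
    exact Finite.le_ciSup (fun i => a i ⬝ᵥ x) i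

end SupportFunction

section MaxAffine

variable {σ : Type*} [Fintype σ] {P Q : Set (σ → ℝ)} {u v : (σ → ℝ) → ℝ}

/-- `u` is a maximum of affine functions with Newton polytope `P`; the biases do not enter `P`. -/
def IsMaxAffine (P : Set (σ → ℝ)) (u : (σ → ℝ) → ℝ) : Prop :=
  ∃ (ι : Type) (_ : Finite ι) (_ : Nonempty ι) (a : ι → σ → ℝ) (β : ι → ℝ),
    convexHull ℝ (Set.range a) = P ∧ ∀ x, u x = ⨆ i, a i ⬝ᵥ x + β i

lemma isMaxAffine_affine (a : σ → ℝ) (b : ℝ) : IsMaxAffine {a} (fun x => a ⬝ᵥ x + b) :=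
  ⟨Unit, inferInstance, inferInstance, fun _ => a, fun _ => b, by simp, fun x => by simp⟩

lemma isMaxAffine_zero : IsMaxAffine (0 : Set (σ → ℝ)) 0 :=
  ⟨Unit, inferInstance, inferInstance, fun _ => 0, fun _ => 0, by simp [Set.singleton_zero],
    fun x => by simp⟩

lemma IsMaxAffine.add (hu : IsMaxAffine P u) (hv : IsMaxAffine Q v) :
    IsMaxAffine (P + Q) (u + v) := by
  obtain ⟨ι, _, _, a, β, rfl, hu⟩ := hu
  obtain ⟨κ, _, _, b, γ, rfl, hv⟩ := hv
  refine ⟨ι × κ, inferInstance, inferInstance, fun z => a z.1 + b z.2, fun z => β z.1 + γ z.2,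
    ?_, fun x => ?_⟩
  · rw [← convexHull_add, ← Set.image2_add, Set.image2_range]
  · simp only [Pi.add_apply, hu, hv, add_dotProduct, add_add_add_comm]
    exact (ciSup_add_ciSup_eq (fun i => a i ⬝ᵥ x + β i) (fun j => b j ⬝ᵥ x + γ j)).symm

lemma IsMaxAffine.sup (hu : IsMaxAffine P u) (hv : IsMaxAffine Q v) :
    IsMaxAffine (convexHull ℝ (P ∪ Q)) (u ⊔ v) := by
  obtain ⟨ι, _, _, a, β, rfl, hu⟩ := hu
  obtain ⟨κ, _, _, b, γ, rfl, hv⟩ := hv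
  refine ⟨ι ⊕ κ, inferInstance, inferInstance, Sum.elim a b, Sum.elim β γ, ?_, fun x => ?_⟩
  · rw [Set.Sum.elim_range, convexHull_convexHull_union_left,
      convexHull_convexHull_union_right]
  · have : (fun z => Sum.elim a b z ⬝ᵥ x + Sum.elim β γ z) =
        Sum.elim (fun i => a i ⬝ᵥ x + β i) (fun j => b j ⬝ᵥ x + γ j) := by
      funext z; cases z <;> rfl
    rw [Pi.sup_apply, hu, hv, this, ciSup_sum_elim]

lemma IsMaxAffine.smul {c : ℝ} (hc : 0 ≤ c) (hu : IsMaxAffine P u) :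
    IsMaxAffine (c • P) (c • u) := by
  obtain ⟨ι, _, _, a, β, rfl, hu⟩ := hu
  refine ⟨ι, inferInstance, inferInstance, fun i => c • a i, fun i => c * β i, ?_, fun x => ?_⟩
  · rw [Set.range_smul, convexHull_smul]
  · simp only [Pi.smul_apply, hu, smul_eq_mul, Real.mul_iSup_of_nonneg hc, smul_dotProduct,
      mul_add]

lemma isMaxAffine_sum {ι : Type*} (s : Finset ι) {P : ι → Set (σ → ℝ)} {u : ι → (σ → ℝ) → ℝ}
    (h : ∀ i ∈ s, IsMaxAffine (P i) (u i)) : IsMaxAffine (∑ i ∈ s, P i) (∑ i ∈ s, u i) := by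
  classical
  induction s using Finset.induction_on with
  | empty => simpa using isMaxAffine_zero
  | insert i s hi ih =>
    rw [sum_insert hi, sum_insert hi]
    exact (h i (mem_insert_self i s)).add (ih fun j hj => h j (mem_insert_of_mem hj))

lemma IsMaxAffine.exists_abs_sub_supportFun_le (hu : IsMaxAffine P u) :
    ∃ B, ∀ x, |u x - supportFun P x| ≤ B := by
  obtain ⟨ι, _, _, a, β, rfl, hu⟩ := hu
  exact ⟨⨆ i, |β i|, fun x => by
    rw [hu, supportFun_convexHull_range]; exact abs_ciSup_add_sub_ciSup_le _ β⟩

lemma IsMaxAffine.eq_supportFun (hu : IsMaxAffine P u) (hhom : PosHomogeneous u) :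
    u = supportFun P := by
  obtain ⟨B, hB⟩ := hu.exists_abs_sub_supportFun_le
  funext x
  exact sub_eq_zero.1 ((hhom.sub (posHomogeneous_supportFun P)).eq_zero_of_abs_le hB x)

lemma IsMaxAffine.sub_eq_supportFun_sub (hu : IsMaxAffine P u) (hv : IsMaxAffine Q v)
    (hhom : PosHomogeneous (u - v)) : u - v = supportFun P - supportFun Q := by
  obtain ⟨B, hB⟩ := hu.exists_abs_sub_supportFun_le
  obtain ⟨C, hC⟩ := hv.exists_abs_sub_supportFun_le
  have hφ (x) : |(u - v - (supportFun P - supportFun Q)) x| ≤ B + C := by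
    rw [show (u - v - (supportFun P - supportFun Q)) x =
      (u x - supportFun P x) - (v x - supportFun Q x) by simp only [Pi.sub_apply]; ring]
    exact (abs_sub _ _).trans (add_le_add (hB x) (hC x))
  funext x
  exact sub_eq_zero.1 ((hhom.sub (posHomogeneous_supportFun P |>.sub
    (posHomogeneous_supportFun Q))).eq_zero_of_abs_le hφ x)

end MaxAffine

section NewtonClasses

variable {n k : ℕ} {P Q : Set (Fin n → ℝ)}

lemma singleton_mem_newt (a : Fin n → ℝ) : ∀ k, ({a} : Set (Fin n → ℝ)) ∈ Newt n k
  | 0 => ⟨a, rfl⟩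
  | k + 1 => ⟨1, fun _ => {a}, fun _ => {a}, fun _ => singleton_mem_newt a k,
      fun _ => singleton_mem_newt a k, by simp⟩

lemma convexHull_union_mem_newt (hP : P ∈ Newt n k) (hQ : Q ∈ Newt n k) :
    convexHull ℝ (P ∪ Q) ∈ Newt n (k + 1) :=
  ⟨1, fun _ => P, fun _ => Q, fun _ => hP, fun _ => hQ, by simp⟩

lemma add_mem_newt (hP : P ∈ Newt n k) (hQ : Q ∈ Newt n k) : P + Q ∈ Newt n k := by
  cases k with
  | zero =>
    obtain ⟨a, rfl⟩ := hP
    obtain ⟨b, rfl⟩ := hQ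
    exact ⟨a + b, Set.singleton_add_singleton⟩
  | succ k =>
    obtain ⟨p, P₁, P₂, hP₁, hP₂, rfl⟩ := hP
    obtain ⟨q, Q₁, Q₂, hQ₁, hQ₂, rfl⟩ := hQ
    refine ⟨p + q, Fin.append P₁ Q₁, Fin.append P₂ Q₂, Fin.addCases ?_ ?_, Fin.addCases ?_ ?_,
      by simp [Fin.sum_univ_add]⟩ <;> simp [*]

lemma smul_mem_newt (c : ℝ) (hP : P ∈ Newt n k) : c • P ∈ Newt n k := by
  induction k generalizing P with
  | zero =>
    obtain ⟨a, rfl⟩ := hP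
    exact ⟨c • a, Set.smul_set_singleton⟩
  | succ k ih =>
    obtain ⟨p, Q, R, hQ, hR, rfl⟩ := hP
    refine ⟨p, fun i => c • Q i, fun i => c • R i, fun i => ih (hQ i), fun i => ih (hR i), ?_⟩
    simp only [Finset.smul_sum, ← Set.smul_set_union, convexHull_smul]

end NewtonClasses

section MaxAffineWithNewton

variable {n k : ℕ} {u v : (Fin n → ℝ) → ℝ}

def MaxAffineWithNewtonIn (n k : ℕ) (u : (Fin n → ℝ) → ℝ) : Prop :=
  ∃ P ∈ Newt n k, IsMaxAffine P u

lemma maxAffineWithNewtonIn_affine (a : Fin n → ℝ) (b : ℝ) :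
    MaxAffineWithNewtonIn n k (fun x => a ⬝ᵥ x + b) :=
  ⟨{a}, singleton_mem_newt a k, isMaxAffine_affine a b⟩

lemma maxAffineWithNewtonIn_zero : MaxAffineWithNewtonIn n k 0 :=
  ⟨0, Set.singleton_zero (α := Fin n → ℝ) ▸ singleton_mem_newt 0 k, isMaxAffine_zero⟩

lemma MaxAffineWithNewtonIn.add (hu : MaxAffineWithNewtonIn n k u)
    (hv : MaxAffineWithNewtonIn n k v) : MaxAffineWithNewtonIn n k (u + v) := by
  obtain ⟨P, hP, hu⟩ := hu
  obtain ⟨Q, hQ, hv⟩ := hv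
  exact ⟨P + Q, add_mem_newt hP hQ, hu.add hv⟩

lemma MaxAffineWithNewtonIn.smul {c : ℝ} (hc : 0 ≤ c) (hu : MaxAffineWithNewtonIn n k u) :
    MaxAffineWithNewtonIn n k (c • u) := by
  obtain ⟨P, hP, hu⟩ := hu
  exact ⟨c • P, smul_mem_newt c hP, hu.smul hc⟩

lemma MaxAffineWithNewtonIn.sup (hu : MaxAffineWithNewtonIn n k u)
    (hv : MaxAffineWithNewtonIn n k v) : MaxAffineWithNewtonIn n (k + 1) (u ⊔ v) := by
  obtain ⟨P, hP, hu⟩ := hu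
  obtain ⟨Q, hQ, hv⟩ := hv
  exact ⟨_, convexHull_union_mem_newt hP hQ, hu.sup hv⟩

lemma MaxAffineWithNewtonIn.succ (hu : MaxAffineWithNewtonIn n k u) :
    MaxAffineWithNewtonIn n (k + 1) u :=
  sup_idem u ▸ hu.sup hu

def maxAffineDiffs (n k : ℕ) : Submodule ℝ ((Fin n → ℝ) → ℝ) where
  carrier := {f | ∃ g h, MaxAffineWithNewtonIn n k g ∧ MaxAffineWithNewtonIn n k h ∧ f = g - h}
  add_mem' := by
    rintro _ _ ⟨g, h, hg, hh, rfl⟩ ⟨g', h', hg', hh', rfl⟩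
    exact ⟨g + g', h + h', hg.add hg', hh.add hh', (add_sub_add_comm g g' h h').symm⟩
  zero_mem' := ⟨0, 0, maxAffineWithNewtonIn_zero, maxAffineWithNewtonIn_zero, (sub_zero 0).symm⟩
  smul_mem' := by
    rintro c _ ⟨g, h, hg, hh, rfl⟩
    rcases le_total 0 c with hc | hc
    · exact ⟨c • g, c • h, hg.smul hc, hh.smul hc, smul_sub c g h⟩
    · refine ⟨(-c) • h, (-c) • g, hh.smul (neg_nonneg.2 hc), hg.smul (neg_nonneg.2 hc), ?_⟩
      rw [neg_smul, neg_smul, neg_sub_neg, smul_sub]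

lemma affine_mem_maxAffineDiffs (a : Fin n → ℝ) (b : ℝ) :
    (fun x => a ⬝ᵥ x + b) ∈ maxAffineDiffs n k :=
  ⟨_, 0, maxAffineWithNewtonIn_affine a b, maxAffineWithNewtonIn_zero, (sub_zero _).symm⟩

lemma relu_mem_maxAffineDiffs {f : (Fin n → ℝ) → ℝ} (hf : f ∈ maxAffineDiffs n k) :
    (fun x => max 0 (f x)) ∈ maxAffineDiffs n (k + 1) := by
  obtain ⟨g, h, hg, hh, rfl⟩ := hf
  refine ⟨h ⊔ g, h, hh.sup hg, hh.succ, funext fun x => ?_⟩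
  rw [Pi.sub_apply, Pi.sub_apply, Pi.sup_apply, ← max_sub_sub_right, sub_self]

end MaxAffineWithNewton

section Readouts

variable {α : Type*} {m : ℕ}

def readouts (G : α → Fin m → ℝ) : Submodule ℝ (α → ℝ) :=
  Submodule.span ℝ (Set.range fun i x => G x i)

lemma mem_readouts_iff {G : α → Fin m → ℝ} {u : α → ℝ} :
    u ∈ readouts G ↔ ∃ c : Fin m → ℝ, ∀ x, u x = c ⬝ᵥ G x := by
  simp only [readouts, Submodule.mem_span_range_iff_exists_fun, funext_iff, Finset.sum_apply,
    Pi.smul_apply, smul_eq_mul, dotProduct, eq_comm]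

lemma coord_mem_readouts (G : α → Fin m → ℝ) (i : Fin m) : (fun x => G x i) ∈ readouts G :=
  Submodule.subset_span ⟨i, rfl⟩

lemma dotProduct_mem_readouts (G : α → Fin m → ℝ) (c : Fin m → ℝ) :
    (fun x => c ⬝ᵥ G x) ∈ readouts G :=
  mem_readouts_iff.2 ⟨c, fun _ => rfl⟩

lemma PosHomogeneous.of_mem_readouts {E : Type*} [AddCommGroup E] [Module ℝ E]
    {G : E → Fin m → ℝ} (hG : ∀ i, PosHomogeneous (G · i)) {u : E → ℝ}
    (hu : u ∈ readouts G) : PosHomogeneous u := by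
  obtain ⟨c, hc⟩ := mem_readouts_iff.1 hu
  intro t ht x
  simp only [hc, dotProduct, hG _ t ht, Finset.mul_sum]
  exact Finset.sum_congr rfl fun i _ => by ring

lemma inReLU_iff {n k : ℕ} {f : (Fin n → ℝ) → ℝ} :
    InReLU n k f ↔ ∃ m G, IsStack k n m G ∧ f ∈ readouts G := by
  simp only [InReLU, mem_readouts_iff, dotProduct]
  exact ⟨fun ⟨m, G, c, hG, hf⟩ => ⟨m, G, hG, c, hf⟩, fun ⟨m, G, hG, c, hf⟩ => ⟨m, G, c, hG, hf⟩⟩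

end Readouts

section Stacks

variable {n k m : ℕ} {G : (Fin n → ℝ) → Fin m → ℝ}

lemma IsStack.readouts_le_maxAffineDiffs (hG : IsStack k n m G) :
    readouts G ≤ maxAffineDiffs n k := by
  refine Submodule.span_le.2 (Set.range_subset_iff.2 fun i => ?_)
  induction hG with
  | base n => simpa using affine_mem_maxAffineDiffs (n := n) (k := 0) (Pi.single i 1) 0
  | step T hT hh ih =>
    obtain ⟨A, b, hT⟩ := hT
    have hrow := Submodule.span_le.2 (Set.range_subset_iff.2 ih)
    have := relu_mem_maxAffineDiffs (add_mem (hrow (dotProduct_mem_readouts _ (A i)))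
      (affine_mem_maxAffineDiffs 0 (b i)))
    simpa [relu, hT, Matrix.mulVec] using this

lemma IsStack.exists_succ_coord_eq {σ : Type} [Finite σ] (hG : IsStack k n m G)
    (v : σ → (Fin n → ℝ) → ℝ) (hv : ∀ s, v s ∈ readouts G) :
    ∃ (m' : ℕ) (e : σ ≃ Fin m') (G' : (Fin n → ℝ) → Fin m' → ℝ), IsStack (k + 1) n m' G' ∧
      ∀ s x, G' x (e s) = max 0 (v s x) := by
  choose w hw using fun s => mem_readouts_iff.1 (hv s)
  let e := Finite.equivFin σ
  let A : Matrix (Fin (Nat.card σ)) (Fin m) ℝ := fun r => w (e.symm r)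
  refine ⟨Nat.card σ, e, relu ∘ A.mulVec ∘ G, .step _ ⟨A, 0, fun y => by simp⟩ hG,
    fun s x => ?_⟩
  simp [relu, A, Matrix.mulVec, hw]

lemma IsStack.exists_succ_sup_mem_readouts {Z : Type} [Finite Z] (hG : IsStack k n m G)
    (hhom : ∀ i, PosHomogeneous (G · i)) (u v : Z → (Fin n → ℝ) → ℝ)
    (hu : ∀ z, u z ∈ readouts G) (hv : ∀ z, v z ∈ readouts G) :
    ∃ (m' : ℕ) (G' : (Fin n → ℝ) → Fin m' → ℝ), IsStack (k + 1) n m' G' ∧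
      (∀ i, PosHomogeneous (G' · i)) ∧ ∀ z, u z ⊔ v z ∈ readouts G' := by
  let w : Z × Fin 3 → (Fin n → ℝ) → ℝ := fun s => ![u s.1 - v s.1, v s.1, -v s.1] s.2
  have hw : ∀ s, w s ∈ readouts G := by
    rintro ⟨z, r⟩
    fin_cases r
    exacts [sub_mem (hu z) (hv z), hv z, neg_mem (hv z)]
  obtain ⟨m', e, G', hG', hG'e⟩ := hG.exists_succ_coord_eq w hw
  refine ⟨m', G', hG', fun r => ?_, fun z => ?_⟩
  · have hr : (G' · r) = fun x => max 0 (w (e.symm r) x) := by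
      funext x
      rw [← hG'e, e.apply_symm_apply]
    rw [hr]
    exact (PosHomogeneous.of_mem_readouts hhom (hw _)).relu
  · have hmax : u z ⊔ v z = (G' · (e (z, 0))) + (G' · (e (z, 1))) - (G' · (e (z, 2))) := by
      funext x
      have hb : max 0 (v z x) - max 0 (-v z x) = v z x := by
        rw [max_comm, max_comm 0]; exact max_zero_sub_max_neg_zero_eq_self _
      simp only [Pi.sup_apply, Pi.add_apply, Pi.sub_apply, Pi.neg_apply, hG'e, w,
        Matrix.cons_val_zero, Matrix.cons_val_one, Matrix.cons_val_two, Matrix.head_cons,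
        Matrix.tail_cons]
      rw [add_sub_assoc, hb, ← max_add_add_right, zero_add, sub_add_cancel, max_comm]
    rw [hmax]
    exact sub_mem (add_mem (coord_mem_readouts _ _) (coord_mem_readouts _ _))
      (coord_mem_readouts _ _)

lemma exists_stack_readouts_isMaxAffine (k : ℕ) {ι : Type} [Finite ι] (P : ι → Set (Fin n → ℝ))
    (hP : ∀ j, P j ∈ Newt n k) :
    ∃ (m : ℕ) (G : (Fin n → ℝ) → Fin m → ℝ), IsStack k n m G ∧
      (∀ i, PosHomogeneous (G · i)) ∧ ∀ j, ∃ u ∈ readouts G, IsMaxAffine (P j) u := by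
  induction k generalizing ι with
  | zero =>
    choose a ha using hP
    refine ⟨n, id, .base n, fun i t _ x => rfl,
      fun j => ⟨_, dotProduct_mem_readouts id (a j), ?_⟩⟩
    simpa [ha] using isMaxAffine_affine (a j) 0
  | succ k ih =>
    choose p Q R hQ hR hPQR using hP
    obtain ⟨m, G, hG, hhom, hu⟩ :=
      ih (fun z : (Σ j, Fin (p j)) × Bool => cond z.2 (Q z.1.1 z.1.2) (R z.1.1 z.1.2))
        (by rintro ⟨⟨j, i⟩, _ | _⟩ <;> simp [hQ, hR])
    choose u hu_mem hu using hu
    obtain ⟨m', G', hG', hhom', hsup⟩ := hG.exists_succ_sup_mem_readouts hhom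
      (fun z => u (z, true)) (fun z => u (z, false)) (fun _ => hu_mem _) (fun _ => hu_mem _)
    refine ⟨m', G', hG', hhom', fun j =>
      ⟨∑ i, (u (⟨j, i⟩, true) ⊔ u (⟨j, i⟩, false)), sum_mem fun i _ => hsup _, ?_⟩⟩
    rw [hPQR j]
    exact isMaxAffine_sum _ fun i _ => (hu (⟨j, i⟩, true)).sup (hu (⟨j, i⟩, false))

end Stacks

section ConvexWithNewton

variable {n k : ℕ}

lemma finMaxOn_univ_eq_ciSup {ι : Type*} [Fintype ι] [Nonempty ι] (v : ι → ℝ) :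
    finMaxOn univ v = ⨆ i, v i := by
  rw [finMaxOn, dif_pos univ_nonempty, sup'_univ_eq_ciSup]

lemma ConvexWithNewtonIn.exists_eq_supportFun {g : (Fin n → ℝ) → ℝ}
    (hg : ConvexWithNewtonIn n k g) : ∃ P ∈ Newt n k, g = supportFun P := by
  obtain ⟨p, a, hp, hg, hP⟩ := hg
  have : Nonempty (Fin p) := ⟨⟨0, hp⟩⟩
  refine ⟨_, hP, funext fun x => ?_⟩
  rw [hg, finMaxOn_univ_eq_ciSup, supportFun_convexHull_range]
  rfl

lemma IsMaxAffine.convexWithNewtonIn_supportFun {P : Set (Fin n → ℝ)} {u : (Fin n → ℝ) → ℝ}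
    (hu : IsMaxAffine P u) (hP : P ∈ Newt n k) : ConvexWithNewtonIn n k (supportFun P) := by
  obtain ⟨ι, _, _, a, -, rfl, -⟩ := hu
  let e := (Finite.equivFin ι).symm
  have : Nonempty (Fin (Nat.card ι)) := e.nonempty
  rw [← e.surjective.range_comp] at hP ⊢
  refine ⟨Nat.card ι, a ∘ e, Nat.card_pos, fun x => ?_, hP⟩
  rw [finMaxOn_univ_eq_ciSup, supportFun_convexHull_range]
  rfl

end ConvexWithNewton

theorem relu_iff_newton_difference_general (n k : ℕ) (f : (Fin n → ℝ) → ℝ)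
    (hpos : ∀ (lam : ℝ), 0 ≤ lam → ∀ x, f (lam • x) = lam * f x) :
    InReLU n k f ↔ ∃ g h : (Fin n → ℝ) → ℝ,
      ConvexWithNewtonIn n k g ∧ ConvexWithNewtonIn n k h ∧ ∀ x, f x = g x - h x := by
  constructor
  · intro hf
    obtain ⟨m, G, hG, hf⟩ := inReLU_iff.1 hf
    obtain ⟨U, V, ⟨P, hP, hU⟩, ⟨Q, hQ, hV⟩, rfl⟩ := hG.readouts_le_maxAffineDiffs hf
    exact ⟨supportFun P, supportFun Q, hU.convexWithNewtonIn_supportFun hP,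
      hV.convexWithNewtonIn_supportFun hQ, congrFun (hU.sub_eq_supportFun_sub hV hpos)⟩
  · rintro ⟨g, h, hg, hh, hf⟩
    obtain ⟨P, hP, rfl⟩ := hg.exists_eq_supportFun
    obtain ⟨Q, hQ, rfl⟩ := hh.exists_eq_supportFun
    obtain ⟨m, G, hG, hhom, hPQ⟩ :=
      exists_stack_readouts_isMaxAffine k ![P, Q] (Fin.forall_fin_two.2 ⟨hP, hQ⟩)
    obtain ⟨u, hu_mem, hu⟩ := hPQ 0
    obtain ⟨v, hv_mem, hv⟩ := hPQ 1
    have hfuv : f = u - v := by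
      rw [hu.eq_supportFun (.of_mem_readouts hhom hu_mem),
        hv.eq_supportFun (.of_mem_readouts hhom hv_mem)]
      exact funext hf
    exact inReLU_iff.2 ⟨m, G, hG, hfuv ▸ sub_mem hu_mem hv_mem⟩

/-- a positively homogeneous CPWL function `f : ℝⁿ → ℝ` can be computed
by a ReLU neural network with `k` hidden layers if and only if `f = g − h` for positively
homogeneous convex CPWL functions `g, h` whose Newton polytopes lie in `Newt_n^(k)`. -/
theorem relu_iff_newton_difference (n k : ℕ) (f : (Fin n → ℝ) → ℝ)
    (hpos : ∀ (lam : ℝ), 0 ≤ lam → ∀ x, f (lam • x) = lam * f x)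
    (hcpwl : IsCPWL f) :
    InReLU n k f ↔ ∃ g h : (Fin n → ℝ) → ℝ,
      ConvexWithNewtonIn n k g ∧ ConvexWithNewtonIn n k h ∧ ∀ x, f x = g x - h x :=
  relu_iff_newton_difference_general n k f hpos
end
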